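/- arXiv:2405.03450 — 11 statements merged into one kernel-verified Lean document; each statement's English description precedes it below -/
import Mathlib

section
/- Let a, b ≥ 2 be integers with gcd(a,b) = 1. Then the sum of (1 - x/a - y/b) over all positive integers x, y with x/a + y/b < 1 equals (a-1)(b-1)/6 - (a-1)(b-1)(a+b+1)/(12ab). -/
open Finset

-- Gauss sums over `Icc 1 n` in ℚ
lemma sumId (n : ℕ) : ∑ k ∈ Icc 1 n, (k : ℚ) = n * (n + 1) / 2 := by
  induction n with
  | zero => simp
  | succ n ih =>
    rw [Finset.sum_Icc_succ_top (by omega), ih]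
    push_cast; ring

lemma sumSq (n : ℕ) : ∑ k ∈ Icc 1 n, (k : ℚ) ^ 2 = n * (n + 1) * (2 * n + 1) / 6 := by
  induction n with
  | zero => simp
  | succ n ih =>
    rw [Finset.sum_Icc_succ_top (by omega), ih]
    push_cast; ring

-- the multiplication-by-b bijection on Ico 1 a
lemma keyBij (a b : ℕ) (ha : 0 < a) (hab : Nat.gcd a b = 1) (f : ℕ → ℚ) :
    ∑ k ∈ Ico 1 a, f (b * k % a) = ∑ k ∈ Ico 1 a, f k := by
  have hmaps : ∀ k ∈ Ico 1 a, b * k % a ∈ Ico 1 a := by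
    intro k hk
    simp only [mem_Ico] at hk ⊢
    refine ⟨?_, Nat.mod_lt _ ha⟩
    rcases Nat.eq_zero_or_pos (b * k % a) with h0 | h0
    · exfalso
      have hdvd : a ∣ b * k := Nat.dvd_of_mod_eq_zero h0
      have : a ∣ k := (Nat.Coprime.dvd_of_dvd_mul_left hab hdvd)
      have := Nat.le_of_dvd (by omega) this
      omega
    · exact h0
  have hinj : (↑(Ico 1 a) : Set ℕ).InjOn (fun k => b * k % a) := by
    intro k hk k' hk' h
    simp only [Finset.coe_Ico, Set.mem_Ico] at hk hk'
    have hmod : b * k ≡ b * k' [MOD a] := h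
    have := Nat.ModEq.cancel_left_of_coprime hab hmod
    have : k % a = k' % a := this
    rw [Nat.mod_eq_of_lt hk.2, Nat.mod_eq_of_lt hk'.2] at this
    exact this
  refine Finset.sum_nbij (fun k => b * k % a) hmaps hinj ?_ (fun k _ => rfl)
  intro y hy
  obtain ⟨x, hx, hxy⟩ := Finset.surj_on_of_inj_on_of_card_le (fun k _ => b * k % a)
    (fun k hk => hmaps k hk) (fun k₁ k₂ h₁ h₂ h => hinj h₁ h₂ h) le_rfl y hy
  exact ⟨x, hx, hxy.symm⟩

-- the inner sum over y, for 1 ≤ k < a (k plays the role of a - x)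
lemma innerSum (a b k : ℕ) (ha : 2 ≤ a) (hb : 2 ≤ b) (hab : Nat.gcd a b = 1)
    (hk1 : 1 ≤ k) (hk2 : k < a) :
    ∑ y ∈ Icc 1 b, (if ((a - k : ℕ) : ℚ) / a + (y : ℚ) / b < 1 then
        1 - ((a - k : ℕ) : ℚ) / a - (y : ℚ) / b else 0)
      = (k : ℚ) ^ 2 * (b / (2 * (a : ℚ) ^ 2)) - ((b * k % a : ℕ) : ℚ) ^ 2 * (1 / (2 * (a : ℚ) ^ 2 * b))
        - (k : ℚ) * (1 / (2 * (a : ℚ))) + ((b * k % a : ℕ) : ℚ) * (1 / (2 * (a : ℚ) * b)) := by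
  have hA : (0 : ℚ) < a := by positivity
  have hB : (0 : ℚ) < b := by exact_mod_cast (by omega : 0 < b)
  set s := b * k % a with hs
  set m := b * k / a with hm
  have hdm : a * m + s = b * k := Nat.div_add_mod _ _
  have hsa : s < a := Nat.mod_lt _ (by omega)
  have hs1 : 1 ≤ s := by
    rcases Nat.eq_zero_or_pos s with h0 | h0
    · exfalso
      have hdvd : a ∣ b * k := Nat.dvd_of_mod_eq_zero h0
      have := Nat.le_of_dvd (by omega) (Nat.Coprime.dvd_of_dvd_mul_left hab hdvd)
      omega
    · exact h0
  have hmb : m < b := by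
    have hlt : b * k < a * b := by
      calc b * k < b * a := by
            exact Nat.mul_lt_mul_of_pos_left hk2 (by omega)
        _ = a * b := Nat.mul_comm _ _
    exact Nat.div_lt_of_lt_mul hlt
  -- condition rewrite
  have hcond : ∀ y : ℕ, (((a - k : ℕ) : ℚ) / a + (y : ℚ) / b < 1 ↔ a * y < b * k) := by
    intro y
    rw [Nat.cast_sub hk2.le]
    rw [div_add_div _ _ (ne_of_gt hA) (ne_of_gt hB), div_lt_one (by positivity)]
    rw [show (a * y < b * k) ↔ ((a * y : ℕ) : ℚ) < ((b * k : ℕ) : ℚ) from (Nat.cast_lt).symm]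
    push_cast
    constructor <;> intro h <;> nlinarith
  -- also the summand rewrite
  have hsummand : ∀ y : ℕ, (1 - ((a - k : ℕ) : ℚ) / a - (y : ℚ) / b)
      = (k : ℚ) / a - (y : ℚ) / b := by
    intro y
    rw [Nat.cast_sub hk2.le]
    field_simp
    ring
  have hfilter : (Icc 1 b).filter (fun y : ℕ => ((a - k : ℕ) : ℚ) / a + (y : ℚ) / b < 1)
      = Icc 1 m := by
    ext y
    simp only [mem_filter, mem_Icc, hcond]
    constructor
    · rintro ⟨⟨h1, h2⟩, h3⟩
      refine ⟨h1, ?_⟩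
      rw [hm, Nat.le_div_iff_mul_le (by omega : 0 < a), Nat.mul_comm]
      omega
    · rintro ⟨h1, h2⟩
      have hym : a * y ≤ a * m := Nat.mul_le_mul_left _ h2
      have hlt : a * y < b * k := by omega
      refine ⟨⟨h1, ?_⟩, hlt⟩
      omega
  rw [← Finset.sum_filter, hfilter]
  have hsum : ∑ y ∈ Icc 1 m, (1 - ((a - k : ℕ) : ℚ) / a - (y : ℚ) / b)
      = ∑ y ∈ Icc 1 m, ((k : ℚ) / a - (y : ℚ) / b) :=
    Finset.sum_congr rfl fun y _ => hsummand y
  rw [hsum, Finset.sum_sub_distrib, Finset.sum_const, ← Finset.sum_div, sumId,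
    Nat.card_Icc]
  have hmcast : (a : ℚ) * m + s = b * k := by exact_mod_cast congrArg (Nat.cast : ℕ → ℚ) hdm
  have hmQ : (m : ℚ) = ((b : ℚ) * k - s) / a := by
    field_simp; linarith
  simp only [Nat.add_sub_cancel, nsmul_eq_mul]
  rw [hmQ]
  field_simp
  ring

theorem stmt_1 (a b : ℕ) (ha : 2 ≤ a) (hb : 2 ≤ b) (hab : Nat.gcd a b = 1) :
    ∑ p ∈ (Finset.Icc 1 a ×ˢ Finset.Icc 1 b).filter
        (fun p => (p.1 : ℚ) / a + (p.2 : ℚ) / b < 1),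
      (1 - (p.1 : ℚ) / a - (p.2 : ℚ) / b) =
    ((a : ℚ) - 1) * ((b : ℚ) - 1) / 6 -
      ((a : ℚ) - 1) * ((b : ℚ) - 1) * ((a : ℚ) + b + 1) / (12 * a * b) := by
  have hA : (0 : ℚ) < a := by exact_mod_cast (by omega : 0 < a)
  have hB : (0 : ℚ) < b := by exact_mod_cast (by omega : 0 < b)
  set F : ℕ → ℚ := fun x => ∑ y ∈ Icc 1 b,
    (if ((x : ℕ) : ℚ) / a + (y : ℚ) / b < 1 then 1 - ((x : ℕ) : ℚ) / a - (y : ℚ) / b else 0)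
    with hF
  have h1 : ∑ p ∈ (Finset.Icc 1 a ×ˢ Finset.Icc 1 b).filter
        (fun p => (p.1 : ℚ) / a + (p.2 : ℚ) / b < 1),
      (1 - (p.1 : ℚ) / a - (p.2 : ℚ) / b) = ∑ x ∈ Icc 1 a, F x := by
    rw [Finset.sum_filter, Finset.sum_product]
  rw [h1]
  have hFa : F a = 0 := by
    rw [hF]
    refine Finset.sum_eq_zero fun y hy => ?_
    rw [if_neg]
    push_neg
    rw [div_self (ne_of_gt hA)]
    have : (0 : ℚ) ≤ (y : ℚ) / b := by positivity
    linarith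
  have h2 : ∑ x ∈ Icc 1 a, F x = ∑ x ∈ Ico 1 a, F x := by
    rw [show Finset.Icc 1 a = Finset.Ico 1 (a + 1) from (Finset.Ico_add_one_right_eq_Icc 1 a).symm,
      Finset.sum_Ico_succ_top (by omega), hFa, add_zero]
  rw [h2]
  have h3 : ∑ x ∈ Ico 1 a, F x = ∑ k ∈ Ico 1 a, F (a - k) := by
    refine Finset.sum_nbij' (fun x => a - x) (fun k => a - k) ?_ ?_ ?_ ?_ ?_
    · intro x hx; simp only [mem_Ico] at hx ⊢; omega
    · intro x hx; simp only [mem_Ico] at hx ⊢; omega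
    · intro x hx; simp only [mem_Ico] at hx; show a - (a - x) = x; omega
    · intro x hx; simp only [mem_Ico] at hx; show a - (a - x) = x; omega
    · intro x hx
      simp only [mem_Ico] at hx
      rw [Nat.sub_sub_self hx.2.le]
  rw [h3]
  have h4 : ∑ k ∈ Ico 1 a, F (a - k)
      = ∑ k ∈ Ico 1 a, ((k : ℚ) ^ 2 * ((b : ℚ) / (2 * (a : ℚ) ^ 2))
        - ((b * k % a : ℕ) : ℚ) ^ 2 * (1 / (2 * (a : ℚ) ^ 2 * b))
        - (k : ℚ) * (1 / (2 * (a : ℚ))) + ((b * k % a : ℕ) : ℚ) * (1 / (2 * (a : ℚ) * b))) := by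
    refine Finset.sum_congr rfl fun k hk => ?_
    simp only [mem_Ico] at hk
    exact innerSum a b k ha hb hab hk.1 hk.2
  rw [h4]
  rw [Finset.sum_add_distrib, Finset.sum_sub_distrib, Finset.sum_sub_distrib]
  rw [keyBij a b (by omega) hab (fun n => (n : ℚ) ^ 2 * (1 / (2 * (a : ℚ) ^ 2 * b)))]
  rw [keyBij a b (by omega) hab (fun n => (n : ℚ) * (1 / (2 * (a : ℚ) * b)))]
  rw [← Finset.sum_mul, ← Finset.sum_mul, ← Finset.sum_mul, ← Finset.sum_mul]
  have hI : Finset.Ico 1 a = Finset.Icc 1 (a - 1) := by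
    rw [← Finset.Ico_add_one_right_eq_Icc]; congr 1; omega
  rw [hI, sumSq (a - 1), sumId (a - 1)]
  have hc : ((a - 1 : ℕ) : ℚ) = (a : ℚ) - 1 := by
    rw [Nat.cast_sub (by omega)]; norm_num
  rw [hc]
  field_simp
  ring
end

section
/- Let a, b ≥ 2 be integers, k = gcd(a,b), a = k·a', b = k·b'. Then the sum of (1 - x/a - y/b) over all positive integers x, y with x/a + y/b < 1 equals (a-1)(b-1)/6 - (a'+b')(k-1)/12 - (a'-1)(b'-1)(a'+b'+1)/(12 a' b'). -/
open Finset

namespace Stmt2Aux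

lemma sum_range_cast (n : ℕ) : ∑ j ∈ range n, (j:ℚ) = n*(n-1)/2 := by
  induction n with
  | zero => simp
  | succ n ih => rw [Finset.sum_range_succ, ih]; push_cast; ring

lemma sum_range_sq (n : ℕ) : ∑ j ∈ range n, (j:ℚ)^2 = n*(n-1)*(2*n-1)/6 := by
  induction n with
  | zero => simp
  | succ n ih => rw [Finset.sum_range_succ, ih]; push_cast; ring

lemma sum_Icc_cast (m : ℕ) : ∑ y ∈ Icc 1 m, (y:ℚ) = m*(m+1)/2 := by
  induction m with
  | zero => simp
  | succ m ih => rw [Finset.sum_Icc_succ_top (by omega), ih]; push_cast; ring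

def S (a b : ℕ) : ℚ :=
  ∑ p ∈ (Finset.Icc 1 a ×ˢ Finset.Icc 1 b).filter
      (fun p => (p.1 : ℚ) / a + (p.2 : ℚ) / b < 1),
    (1 - (p.1 : ℚ) / a - (p.2 : ℚ) / b)

def m (a b x : ℕ) : ℕ := b - 1 - b * x / a

def g (a b x : ℕ) : ℚ :=
  (m a b x) * (1 - (x:ℚ)/a) - (m a b x) * ((m a b x) + 1) / (2*b)

lemma cond_iff {a b x y : ℕ} (ha : 1 ≤ a) (hb : 1 ≤ b) (hy : 1 ≤ y) :
    ((x:ℚ)/a + (y:ℚ)/b < 1) ↔ y ≤ m a b x := by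
  have ha0 : (0:ℚ) < a := by exact_mod_cast ha
  have hb0 : (0:ℚ) < b := by exact_mod_cast hb
  have h1 : ((x:ℚ)/a + (y:ℚ)/b < 1) ↔ (x*b + y*a) < a*b := by
    rw [div_add_div _ _ (ne_of_gt ha0) (ne_of_gt hb0), div_lt_one (by positivity)]
    constructor
    · intro h
      have : ((x*b + y*a : ℕ) : ℚ) < ((a*b : ℕ) : ℚ) := by push_cast; linarith
      exact_mod_cast this
    · intro h
      have : ((x*b + y*a : ℕ) : ℚ) < ((a*b : ℕ) : ℚ) := by exact_mod_cast h
      push_cast at this; linarith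
  rw [h1]
  obtain ⟨B, rfl⟩ : ∃ B, b = B + 1 := ⟨b - 1, by omega⟩
  have hd := Nat.div_add_mod ((B+1)*x) a
  have hra : (B+1)*x % a < a := Nat.mod_lt _ ha
  set f := (B+1)*x / a with hf
  set r := (B+1)*x % a with hr
  have hmm : m a (B+1) x = B - f := by unfold m; omega
  rw [hmm]
  have key : y ≤ B - f ↔ y + f ≤ B := by omega
  rw [key]
  constructor
  · intro h
    have h2 : a * (f + y) < a * (B+1) := by
      have : a * f ≤ (B+1)*x := by omega
      calc a * (f + y) = a*f + y*a := by ring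
        _ ≤ (B+1)*x + y*a := by omega
        _ = x*(B+1) + y*a := by ring
        _ < a*(B+1) := h
    have := Nat.lt_of_mul_lt_mul_left h2
    omega
  · intro h
    have h2 : a * (f + y) ≤ a * B := Nat.mul_le_mul_left a (by omega)
    have h3 : a*f + r = (B+1)*x := by omega
    calc x*(B+1) + y*a = (B+1)*x + y*a := by ring
      _ = a*f + r + y*a := by omega
      _ = a*(f+y) + r := by ring
      _ ≤ a*B + r := by omega
      _ < a*B + a := by omega
      _ = a*(B+1) := by ring

lemma sum_eq (a b : ℕ) (ha : 1 ≤ a) (hb : 1 ≤ b) :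
    S a b = ∑ x ∈ Icc 1 a, g a b x := by
  have hb0 : ((b:ℚ)) ≠ 0 := by
    have : (0:ℚ) < b := by exact_mod_cast hb
    linarith
  unfold S
  rw [Finset.sum_filter, Finset.sum_product]
  refine Finset.sum_congr rfl (fun x hx => ?_)
  rw [← Finset.sum_filter]
  have hfil : (Icc 1 b).filter (fun y : ℕ => (x:ℚ)/a + (y:ℚ)/b < 1) = Icc 1 (m a b x) := by
    ext y
    simp only [Finset.mem_filter, Finset.mem_Icc]
    constructor
    · rintro ⟨⟨h1, h2⟩, h3⟩
      exact ⟨h1, (cond_iff ha hb h1).1 h3⟩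
    · rintro ⟨h1, h2⟩
      have hmb : m a b x ≤ b := by unfold m; exact le_trans (Nat.sub_le _ _) (Nat.sub_le _ _)
      exact ⟨⟨h1, le_trans h2 hmb⟩, (cond_iff ha hb h1).2 h2⟩
  rw [hfil]
  have step : ∀ y : ℕ, (1 - (x:ℚ)/a - (y:ℚ)/b) = (1 - (x:ℚ)/a) - (y:ℚ)/b := by
    intro y; ring
  calc ∑ y ∈ Icc 1 (m a b x), (1 - (x:ℚ)/a - (y:ℚ)/b)
      = ∑ y ∈ Icc 1 (m a b x), ((1 - (x:ℚ)/a) - (y:ℚ)/b) := by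
        exact Finset.sum_congr rfl (fun y _ => step y)
    _ = (Icc 1 (m a b x)).card • (1 - (x:ℚ)/a) - (∑ y ∈ Icc 1 (m a b x), (y:ℚ))/b := by
        rw [Finset.sum_sub_distrib, Finset.sum_const, ← Finset.sum_div]
    _ = g a b x := by
        rw [Nat.card_Icc, sum_Icc_cast]
        unfold g
        simp only [Nat.add_sub_cancel, nsmul_eq_mul]
        field_simp

lemma g_rec (a b x : ℕ) (ha : 1 ≤ a) (hb : 1 ≤ b) (hx1 : 1 ≤ x) (hxa : x ≤ a) :
    g a (a+b) x = (b:ℚ)/((a:ℚ)+b) * g a b x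
      + (((a:ℚ)-x) * (1 - (x:ℚ)/a) - ((a:ℚ)-x)*(((a:ℚ)-x)+1)/(2*((a:ℚ)+b))) := by
  have ha0 : ((a:ℚ)) ≠ 0 := by positivity
  have hb0 : ((b:ℚ)) ≠ 0 := by positivity
  have hab0 : ((a:ℚ)+b) ≠ 0 := by positivity
  rcases eq_or_lt_of_le hxa with rfl|hlt
  · have h1 : m x b x = 0 := by
      unfold m; rw [Nat.mul_div_cancel _ (by omega)]; omega
    have h2 : m x (x+b) x = 0 := by
      unfold m; rw [Nat.mul_div_cancel _ (by omega)]; omega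
    simp only [g, h1, h2, Nat.cast_zero, zero_mul, zero_add, mul_zero, sub_zero,
      zero_div, sub_self]
  · -- x < a
    have hfd : b*x < b*a := Nat.mul_lt_mul_left hb |>.mpr hlt
    have hflt : b*x/a < b := by
      rw [Nat.div_lt_iff_lt_mul (by omega)]
      calc b*x < b*a := hfd
        _ ≤ b*a := le_refl _
    have hF : (a+b)*x/a = x + b*x/a := by
      rw [add_mul, Nat.mul_add_div (by omega)]
    have hm1 : ((m a b x : ℕ) : ℚ) = (b:ℚ) - (1 + ((b*x/a : ℕ):ℚ)) := by
      unfold m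
      rw [Nat.sub_sub, Nat.cast_sub (by omega)]
      push_cast; ring
    have hm2 : ((m a (a+b) x : ℕ) : ℚ) = (a:ℚ) + b - (1 + x + ((b*x/a : ℕ):ℚ)) := by
      unfold m
      rw [hF, Nat.sub_sub, Nat.cast_sub (by omega)]
      push_cast; ring
    unfold g
    rw [hm1, hm2]
    push_cast
    field_simp
    ring

lemma reindex (a : ℕ) (F : ℕ → ℚ) :
    ∑ x ∈ Icc 1 a, F (a - x) = ∑ j ∈ range a, F j := by
  apply Finset.sum_nbij' (i := fun x => a - x) (j := fun j => a - j)
  · intro x hx; simp only [mem_Icc] at hx; simp only [mem_range]; omega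
  · intro j hj; simp only [mem_range] at hj; simp only [mem_Icc]; omega
  · intro x hx; simp only [mem_Icc] at hx; omega
  · intro j hj; simp only [mem_range] at hj; omega
  · intro x hx; rfl

lemma sum_h (a b : ℕ) (ha : 1 ≤ a) (hb : 1 ≤ b) :
    ∑ x ∈ Icc 1 a, (((a:ℚ)-x) * (1 - (x:ℚ)/a) - ((a:ℚ)-x)*(((a:ℚ)-x)+1)/(2*((a:ℚ)+b)))
      = ((a:ℚ)-1)*(2*(a:ℚ)-1)/6 - (a:ℚ)*((a:ℚ)-1)*((a:ℚ)+1)/(6*((a:ℚ)+b)) := by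
  have ha0 : ((a:ℚ)) ≠ 0 := by positivity
  have hab0 : ((a:ℚ)+b) ≠ 0 := by positivity
  have step : ∑ x ∈ Icc 1 a, (((a:ℚ)-x) * (1 - (x:ℚ)/a) - ((a:ℚ)-x)*(((a:ℚ)-x)+1)/(2*((a:ℚ)+b)))
      = ∑ x ∈ Icc 1 a, ((((a - x : ℕ)):ℚ)^2/a - ((a-x : ℕ):ℚ)*(((a-x:ℕ):ℚ)+1)/(2*((a:ℚ)+b))) := by
    refine Finset.sum_congr rfl (fun x hx => ?_)
    simp only [mem_Icc] at hx
    have hc : ((a - x : ℕ) : ℚ) = (a:ℚ) - x := by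
      rw [Nat.cast_sub hx.2]
    rw [hc]
    field_simp
  rw [step, reindex a (fun j => ((j:ℚ))^2/a - (j:ℚ)*((j:ℚ)+1)/(2*((a:ℚ)+b)))]
  rw [Finset.sum_sub_distrib, ← Finset.sum_div]
  have e2 : ∑ j ∈ range a, ((j:ℚ)*((j:ℚ)+1)/(2*((a:ℚ)+b)))
      = (∑ j ∈ range a, ((j:ℚ)^2 + j))/(2*((a:ℚ)+b)) := by
    rw [← Finset.sum_div]
    congr 1
    refine Finset.sum_congr rfl (fun j _ => ?_)
    ring
  rw [e2, Finset.sum_add_distrib, sum_range_sq, sum_range_cast]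
  field_simp
  ring

lemma S_rec (a b : ℕ) (ha : 1 ≤ a) (hb : 1 ≤ b) :
    S a (a+b) = (b:ℚ)/((a:ℚ)+b) * S a b
      + (((a:ℚ)-1)*(2*(a:ℚ)-1)/6 - (a:ℚ)*((a:ℚ)-1)*((a:ℚ)+1)/(6*((a:ℚ)+b))) := by
  rw [sum_eq a (a+b) ha (by omega), sum_eq a b ha hb]
  have step : ∑ x ∈ Icc 1 a, g a (a+b) x
      = ∑ x ∈ Icc 1 a, ((b:ℚ)/((a:ℚ)+b) * g a b x
        + (((a:ℚ)-x) * (1 - (x:ℚ)/a) - ((a:ℚ)-x)*(((a:ℚ)-x)+1)/(2*((a:ℚ)+b)))) := by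
    refine Finset.sum_congr rfl (fun x hx => ?_)
    simp only [mem_Icc] at hx
    exact g_rec a b x ha hb hx.1 hx.2
  rw [step, Finset.sum_add_distrib, ← Finset.mul_sum, sum_h a b ha hb]

lemma S_symm (a b : ℕ) : S a b = S b a := by
  unfold S
  apply Finset.sum_nbij' (i := Prod.swap) (j := Prod.swap)
  · rintro ⟨x, y⟩ hp
    simp only [mem_filter, mem_product, mem_Icc] at hp ⊢
    exact ⟨⟨hp.1.2, hp.1.1⟩, by simpa [add_comm] using hp.2⟩
  · rintro ⟨x, y⟩ hp
    simp only [mem_filter, mem_product, mem_Icc] at hp ⊢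
    exact ⟨⟨hp.1.2, hp.1.1⟩, by simpa [add_comm] using hp.2⟩
  · rintro ⟨x, y⟩ _; rfl
  · rintro ⟨x, y⟩ _; rfl
  · rintro ⟨x, y⟩ _
    simp only [Prod.swap]
    ring

lemma S_one (a : ℕ) (ha : 1 ≤ a) : S a 1 = 0 := by
  rw [sum_eq a 1 ha le_rfl]
  apply Finset.sum_eq_zero
  intro x _
  have hm : m a 1 x = 0 := by unfold m; rw [Nat.sub_self, Nat.zero_sub]
  simp [g, hm]

lemma S_diag (a : ℕ) (ha : 1 ≤ a) : S a a = ((a:ℚ)-1)*((a:ℚ)-2)/6 := by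
  have ha0 : ((a:ℚ)) ≠ 0 := by positivity
  rw [sum_eq a a ha ha]
  have step : ∑ x ∈ Icc 1 a, g a a x
      = ∑ x ∈ Icc 1 a, ((((a-x : ℕ)):ℚ)^2 - ((a-x:ℕ):ℚ))/(2*(a:ℚ)) := by
    refine Finset.sum_congr rfl (fun x hx => ?_)
    simp only [mem_Icc] at hx
    have hdiv : a * x / a = x := Nat.mul_div_cancel_left x (by omega)
    rcases eq_or_lt_of_le hx.2 with rfl|hlt
    · have hm : m x x x = 0 := by unfold m; rw [hdiv]; omega
      simp [g, hm]
    · have hm : m a a x = a - 1 - x := by unfold m; rw [hdiv]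
      have hc1 : ((m a a x : ℕ) : ℚ) = (a:ℚ) - (1 + x) := by
        rw [hm, Nat.sub_sub, Nat.cast_sub (by omega)]
        push_cast; ring
      have hc2 : ((a - x : ℕ) : ℚ) = (a:ℚ) - x := Nat.cast_sub hx.2
      unfold g
      rw [hc1, hc2]
      field_simp
      ring
  rw [step, reindex a (fun j => (((j:ℚ))^2 - (j:ℚ))/(2*(a:ℚ)))]
  rw [← Finset.sum_div, Finset.sum_sub_distrib, sum_range_sq, sum_range_cast]
  field_simp
  ring

/-- the closed form in terms of k, a', b' (as rationals) -/
def Rq (k a' b' : ℚ) : ℚ :=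
  (k*a'-1)*(k*b'-1)/6 - (a'+b')*(k-1)/12 - (a'-1)*(b'-1)*(a'+b'+1)/(12*a'*b')

def R (a b : ℕ) : ℚ :=
  Rq (Nat.gcd a b) (a / Nat.gcd a b : ℕ) (b / Nat.gcd a b : ℕ)

lemma Rq_rec (k a' b' : ℚ) (hk : k ≠ 0) (ha' : a' ≠ 0) (hb' : b' ≠ 0)
    (hab : a' + b' ≠ 0) (hkab : k*a' + k*b' ≠ 0) :
    Rq k a' (a'+b') = (k*b')/(k*a'+k*b') * Rq k a' b'
      + ((k*a'-1)*(2*(k*a')-1)/6 - (k*a')*((k*a')-1)*((k*a')+1)/(6*(k*a'+k*b'))) := by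
  unfold Rq
  field_simp
  ring

lemma R_rec (a b : ℕ) (ha : 1 ≤ a) (hb : 1 ≤ b) :
    R a (a+b) = (b:ℚ)/((a:ℚ)+b) * R a b
      + (((a:ℚ)-1)*(2*(a:ℚ)-1)/6 - (a:ℚ)*((a:ℚ)-1)*((a:ℚ)+1)/(6*((a:ℚ)+b))) := by
  set k := Nat.gcd a b with hk
  have hk0 : 1 ≤ k := Nat.gcd_pos_of_pos_left b (by omega)
  have hka : k ∣ a := Nat.gcd_dvd_left a b
  have hkb : k ∣ b := Nat.gcd_dvd_right a b
  have hg : Nat.gcd a (a+b) = k := by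
    rw [add_comm]
    exact Nat.gcd_add_self_right a b
  have hdiv : (a+b)/k = a/k + b/k := Nat.add_div_of_dvd_right hka
  have ha'0 : 1 ≤ a/k := Nat.one_le_div_iff (by omega) |>.mpr (Nat.le_of_dvd (by omega) hka)
  have hb'0 : 1 ≤ b/k := Nat.one_le_div_iff (by omega) |>.mpr (Nat.le_of_dvd (by omega) hkb)
  have hca : ((a:ℚ)) = (k:ℚ) * ((a/k : ℕ):ℚ) := by
    rw [← Nat.cast_mul, Nat.mul_div_cancel' hka]
  have hcb : ((b:ℚ)) = (k:ℚ) * ((b/k : ℕ):ℚ) := by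
    rw [← Nat.cast_mul, Nat.mul_div_cancel' hkb]
  have hkq : ((k:ℚ)) ≠ 0 := by positivity
  have haq : ((a/k : ℕ):ℚ) ≠ 0 := by
    have : (0:ℚ) < ((a/k : ℕ):ℚ) := by exact_mod_cast ha'0
    linarith
  have hbq : ((b/k : ℕ):ℚ) ≠ 0 := by
    have : (0:ℚ) < ((b/k : ℕ):ℚ) := by exact_mod_cast hb'0
    linarith
  have habq : ((a/k : ℕ):ℚ) + ((b/k : ℕ):ℚ) ≠ 0 := by positivity
  have hkabq : (k:ℚ)*((a/k : ℕ):ℚ) + (k:ℚ)*((b/k : ℕ):ℚ) ≠ 0 := by positivity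
  unfold R
  rw [hg, hdiv]
  push_cast
  rw [hca, hcb]
  exact Rq_rec (k:ℚ) ((a/k : ℕ):ℚ) ((b/k : ℕ):ℚ) hkq haq hbq habq hkabq

lemma R_symm (a b : ℕ) : R a b = R b a := by
  unfold R Rq
  rw [Nat.gcd_comm b a]
  ring

lemma R_one (a : ℕ) (ha : 1 ≤ a) : R a 1 = 0 := by
  unfold R Rq
  simp [Nat.gcd_one_right]

lemma R_diag (a : ℕ) (ha : 1 ≤ a) : R a a = ((a:ℚ)-1)*((a:ℚ)-2)/6 := by
  unfold R Rq
  rw [Nat.gcd_self, Nat.div_self (by omega)]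
  push_cast
  ring

lemma main : ∀ n a b : ℕ, a + b ≤ n → 1 ≤ a → 1 ≤ b → S a b = R a b := by
  intro n
  induction n with
  | zero => intro a b h ha hb; omega
  | succ n ih =>
    intro a b hab ha hb
    rcases lt_trichotomy a b with h|h|h
    · obtain ⟨c, hc1, rfl⟩ : ∃ c, 1 ≤ c ∧ b = a + c := ⟨b - a, by omega, by omega⟩
      have ihc : S a c = R a c := ih a c (by omega) ha hc1
      rw [S_rec a c ha hc1, R_rec a c ha hc1, ihc]
    · subst h
      rw [S_diag a ha, R_diag a ha]
    · obtain ⟨c, hc1, rfl⟩ : ∃ c, 1 ≤ c ∧ a = b + c := ⟨a - b, by omega, by omega⟩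
      have ihc : S b c = R b c := ih b c (by omega) hb hc1
      rw [S_symm, R_symm]
      rw [S_rec b c hb hc1, R_rec b c hb hc1, ihc]

end Stmt2Aux

theorem stmt_2 (a b a' b' : ℕ) (ha : 2 ≤ a) (hb : 2 ≤ b)
    (ha' : a = Nat.gcd a b * a') (hb' : b = Nat.gcd a b * b') :
    ∑ p ∈ (Finset.Icc 1 a ×ˢ Finset.Icc 1 b).filter
        (fun p => (p.1 : ℚ) / a + (p.2 : ℚ) / b < 1),
      (1 - (p.1 : ℚ) / a - (p.2 : ℚ) / b) =
    ((a : ℚ) - 1) * ((b : ℚ) - 1) / 6 -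
      ((a' : ℚ) + b') * ((Nat.gcd a b : ℚ) - 1) / 12 -
      ((a' : ℚ) - 1) * ((b' : ℚ) - 1) * ((a' : ℚ) + b' + 1) / (12 * a' * b') := by
  have hk : 1 ≤ Nat.gcd a b := Nat.gcd_pos_of_pos_left b (by omega)
  have hda : a / Nat.gcd a b = a' :=
    Nat.div_eq_of_eq_mul_left (by omega) (ha'.trans (Nat.mul_comm _ _))
  have hdb : b / Nat.gcd a b = b' :=
    Nat.div_eq_of_eq_mul_left (by omega) (hb'.trans (Nat.mul_comm _ _))
  have := Stmt2Aux.main (a + b) a b le_rfl (by omega) (by omega)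
  rw [Stmt2Aux.S, Stmt2Aux.R, Stmt2Aux.Rq, hda, hdb] at this
  rw [this]
  have hca : ((a:ℚ)) = (Nat.gcd a b : ℚ) * (a' : ℚ) := by exact_mod_cast congrArg (Nat.cast : ℕ → ℚ) ha'
  have hcb : ((b:ℚ)) = (Nat.gcd a b : ℚ) * (b' : ℚ) := by exact_mod_cast congrArg (Nat.cast : ℕ → ℚ) hb'
  rw [← hca, ← hcb]
end

section
/- Let a, b ≥ 2 be coprime integers with a ≥ 2 and b ≥ 3. Then (a-1)(b-1)/6 minus the sum of (1 - x/a - y/b) over positive integers x, y with x/a + y/b < 1 equals (a-1)(b-1)(a+b+1)/(12ab), and this quantity is at least 1/6. -/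
open Finset

private def Sq (a b : ℕ) : ℚ :=
  ∑ p ∈ (Finset.Icc 1 a ×ˢ Finset.Icc 1 b).filter
      (fun p => (p.1 : ℚ) / a + (p.2 : ℚ) / b < 1),
    (1 - (p.1 : ℚ) / a - (p.2 : ℚ) / b)

private lemma sumIccQ (m : ℕ) : ∑ y ∈ Finset.Icc 1 m, (y : ℚ) = m * (m + 1) / 2 := by
  induction m with
  | zero => simp
  | succ n ih =>
    rw [Finset.sum_Icc_succ_top (by omega)]
    push_cast
    rw [ih]; ring

private lemma sumIccQ2 (m : ℕ) :
    ∑ y ∈ Finset.Icc 1 m, (y : ℚ)^2 = m * (m + 1) * (2*m+1) / 6 := by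
  induction m with
  | zero => simp
  | succ n ih =>
    rw [Finset.sum_Icc_succ_top (by omega)]
    push_cast
    rw [ih]; ring

private lemma cond_iff (a b x y : ℕ) (ha : 0 < a) (hb : 0 < b) :
    ((x:ℚ)/a + y/b < 1) ↔ (b*x + a*y < a*b) := by
  have ha' : (0:ℚ) < a := by exact_mod_cast ha
  have hb' : (0:ℚ) < b := by exact_mod_cast hb
  rw [div_add_div _ _ (ne_of_gt ha') (ne_of_gt hb'), div_lt_one (by positivity)]
  constructor
  · intro h
    have : (b:ℚ)*x + a*y < a*b := by nlinarith
    exact_mod_cast this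
  · intro h
    have : (b:ℚ)*x + a*y < a*b := by exact_mod_cast h
    nlinarith

private lemma Sq_swap (a b : ℕ) : Sq a b = Sq b a := by
  unfold Sq
  apply Finset.sum_nbij' (fun p => Prod.swap p) (fun p => Prod.swap p)
  · intro p hp
    simp only [mem_filter, mem_product] at hp ⊢
    obtain ⟨⟨h1, h2⟩, h3⟩ := hp
    refine ⟨⟨h2, h1⟩, ?_⟩
    simpa [add_comm] using h3
  · intro p hp
    simp only [mem_filter, mem_product] at hp ⊢
    obtain ⟨⟨h1, h2⟩, h3⟩ := hp
    refine ⟨⟨h2, h1⟩, ?_⟩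
    simpa [add_comm] using h3
  · intro p _; rfl
  · intro p _; rfl
  · intro p _
    simp [Prod.swap]; ring

private lemma Sq_one (b : ℕ) : Sq 1 b = 0 := by
  unfold Sq
  apply Finset.sum_eq_zero
  intro p hp
  simp only [mem_filter, mem_product, mem_Icc] at hp
  obtain ⟨⟨⟨h1, h2⟩, ⟨h3, h4⟩⟩, h5⟩ := hp
  exfalso
  have hb : 0 < b := by omega
  rw [cond_iff 1 b p.1 p.2 (by omega) hb] at h5
  have : b ≤ b * p.1 := Nat.le_mul_of_pos_right b (by omega)
  omega

private lemma tri (a b : ℕ) (ha : 1 ≤ a) (hab : a < b) :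
    ∑ p ∈ (Finset.Icc 1 a ×ˢ Finset.Icc 1 b).filter (fun p => p.1 + p.2 ≤ a),
      (1 - (p.1:ℚ)/a - (p.2:ℚ)/b)
    = (a:ℚ)*((a:ℚ)-1)/2 - ((a:ℚ)-1)*((a:ℚ)+1)/6
        - (a:ℚ)*((a:ℚ)-1)*((a:ℚ)+1)/(6*(b:ℚ)) := by
  have ha0 : (0:ℚ) < a := by exact_mod_cast ha
  have hb0 : (0:ℚ) < b := by exact_mod_cast (by omega : 0 < b)
  rw [Finset.sum_filter, Finset.sum_product]
  have key : ∀ x ∈ Finset.Icc 1 a,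
      (∑ y ∈ Finset.Icc 1 b, if x + y ≤ a then (1 - (x:ℚ)/a - (y:ℚ)/b) else 0)
      = ((a:ℚ) - ((a:ℚ)^2+a)/(2*b)) + (-2 + (2*(a:ℚ)+1)/(2*b)) * x
          + (1/(a:ℚ) - 1/(2*(b:ℚ))) * x^2 := by
    intro x hx
    simp only [Finset.mem_Icc] at hx
    have hfil : (Finset.Icc 1 b).filter (fun y => x + y ≤ a) = Finset.Icc 1 (a - x) := by
      ext y
      simp only [Finset.mem_filter, Finset.mem_Icc]
      omega
    rw [← Finset.sum_filter, hfil]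
    have hx' : (1:ℚ) ≤ (x:ℚ) := by exact_mod_cast hx.1
    have hxa : (x:ℚ) ≤ (a:ℚ) := by exact_mod_cast hx.2
    have hm : ((a - x : ℕ) : ℚ) = (a:ℚ) - x := by
      have := hx.2
      push_cast [Nat.cast_sub this]
      ring
    rw [Finset.sum_sub_distrib, Finset.sum_sub_distrib, Finset.sum_const, Finset.sum_const,
      ← Finset.sum_div, sumIccQ, Nat.card_Icc]
    simp only [Nat.add_sub_cancel, nsmul_eq_mul, hm]
    field_simp
    ring
  rw [Finset.sum_congr rfl key]
  rw [Finset.sum_add_distrib, Finset.sum_add_distrib, Finset.sum_const, ← Finset.mul_sum,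
    ← Finset.mul_sum, sumIccQ, sumIccQ2, Nat.card_Icc]
  simp only [Nat.add_sub_cancel, nsmul_eq_mul]
  field_simp
  ring

private lemma shear_iff (A B X Y : ℚ) (hA : 0 < A) (hAB : A < B) :
    X/A + (X+Y-A)/(B-A) < 1 ↔ X/A + Y/B < 1 := by
  have hB : 0 < B := lt_trans hA hAB
  have hBA : 0 < B - A := by linarith
  rw [div_add_div _ _ hA.ne' hBA.ne', div_lt_one (mul_pos hA hBA),
      div_add_div _ _ hA.ne' hB.ne', div_lt_one (mul_pos hA hB)]
  constructor <;> intro h <;> nlinarith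

private lemma Sq_rec (a b : ℕ) (ha : 1 ≤ a) (hab : a < b) :
    Sq a b = (∑ p ∈ (Finset.Icc 1 a ×ˢ Finset.Icc 1 b).filter (fun p => p.1 + p.2 ≤ a),
        (1 - (p.1:ℚ)/a - (p.2:ℚ)/b))
      + (((b:ℚ) - a)/b) * Sq a (b - a) := by
  have ha0 : (0:ℚ) < a := by exact_mod_cast ha
  have hb0 : (0:ℚ) < b := by exact_mod_cast (by omega : 0 < b)
  have hab0 : (a:ℚ) < b := by exact_mod_cast hab
  unfold Sq
  rw [← Finset.sum_filter_add_sum_filter_not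
    (((Finset.Icc 1 a ×ˢ Finset.Icc 1 b).filter
      (fun p => (p.1 : ℚ) / a + (p.2 : ℚ) / b < 1))) (fun p => p.1 + p.2 ≤ a)]
  congr 1
  · -- triangle part
    rw [Finset.filter_filter]
    refine Finset.sum_congr (Finset.filter_congr ?_) (fun _ _ => rfl)
    intro p hp
    simp only [Finset.mem_product, Finset.mem_Icc] at hp
    obtain ⟨⟨hx1, hx2⟩, hy1, hy2⟩ := hp
    simp only [and_iff_right_iff_imp]
    intro hle
    have hx1' : (1:ℚ) ≤ p.1 := by exact_mod_cast hx1
    have hy1' : (1:ℚ) ≤ p.2 := by exact_mod_cast hy1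
    have hle' : (p.1:ℚ) + p.2 ≤ a := by exact_mod_cast hle
    rw [div_add_div _ _ ha0.ne' hb0.ne', div_lt_one (mul_pos ha0 hb0)]
    nlinarith
  · -- shear part
    rw [Finset.mul_sum]
    apply Finset.sum_nbij' (fun p => (p.1, p.2 + p.1 - a)) (fun q => (q.1, q.2 + a - q.1))
    · intro p hp
      simp only [Finset.mem_filter, Finset.mem_product, Finset.mem_Icc, not_le] at hp ⊢
      obtain ⟨⟨⟨⟨hx1, hx2⟩, hy1, hy2⟩, hcond⟩, hgt⟩ := hp
      have hx1' : (1:ℚ) ≤ p.1 := by exact_mod_cast hx1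
      have hy1' : (1:ℚ) ≤ p.2 := by exact_mod_cast hy1
      have hx2' : (p.1:ℚ) ≤ a := by exact_mod_cast hx2
      have hy2' : (p.2:ℚ) ≤ b := by exact_mod_cast hy2
      have hsum : p.1 + p.2 ≤ b := by
        have h2 : (p.1:ℚ)/a + (p.2:ℚ)/b < 1 := hcond
        rw [div_add_div _ _ ha0.ne' hb0.ne', div_lt_one (mul_pos ha0 hb0)] at h2
        have : (p.1:ℚ) + p.2 ≤ b := by nlinarith
        exact_mod_cast this
      refine ⟨⟨⟨hx1, hx2⟩, by omega, by omega⟩, ?_⟩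
      have hc : ((p.2 + p.1 - a : ℕ) : ℚ) = (p.1:ℚ) + p.2 - a := by
        have : a ≤ p.2 + p.1 := by omega
        push_cast [Nat.cast_sub this]; ring
      have hc2 : ((b - a : ℕ) : ℚ) = (b:ℚ) - a := by
        push_cast [Nat.cast_sub (le_of_lt hab)]; ring
      rw [hc, hc2]
      rw [show (p.1:ℚ) + p.2 - a = (p.1:ℚ) + ((p.2:ℚ)) - a by ring]
      exact (shear_iff (a:ℚ) (b:ℚ) p.1 p.2 ha0 hab0).mpr hcond
    · intro q hq
      simp only [Finset.mem_filter, Finset.mem_product, Finset.mem_Icc, not_le] at hq ⊢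
      obtain ⟨⟨⟨hx1, hx2⟩, hy1, hy2⟩, hcond⟩ := hq
      have hc2 : ((b - a : ℕ) : ℚ) = (b:ℚ) - a := by
        push_cast [Nat.cast_sub (le_of_lt hab)]; ring
      have hy2b : q.2 ≤ b - a := hy2
      refine ⟨⟨⟨⟨hx1, hx2⟩, by omega, by omega⟩, ?_⟩, by omega⟩
      have hc : ((q.2 + a - q.1 : ℕ) : ℚ) = (q.2:ℚ) + a - q.1 := by
        have : q.1 ≤ q.2 + a := by omega
        push_cast [Nat.cast_sub this]; ring
      rw [hc]
      have := (shear_iff (a:ℚ) (b:ℚ) q.1 ((q.2:ℚ) + a - q.1) ha0 hab0).mp ?_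
      · exact this
      · rw [show (q.1:ℚ) + ((q.2:ℚ) + a - q.1) - a = (q.2:ℚ) by ring]
        rw [hc2] at hcond
        exact hcond
    · intro p hp
      simp only [Finset.mem_filter, Finset.mem_product, Finset.mem_Icc, not_le] at hp
      have := hp.2
      ext <;> simp <;> omega
    · intro q hq
      simp only [Finset.mem_filter, Finset.mem_product, Finset.mem_Icc, not_le] at hq
      obtain ⟨⟨⟨hx1, hx2⟩, hy1, hy2⟩, hcond⟩ := hq
      ext <;> simp <;> omega
    · intro p hp
      simp only [Finset.mem_filter, Finset.mem_product, Finset.mem_Icc, not_le] at hp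
      obtain ⟨⟨⟨⟨hx1, hx2⟩, hy1, hy2⟩, hcond⟩, hgt⟩ := hp
      have hc : ((p.2 + p.1 - a : ℕ) : ℚ) = (p.1:ℚ) + p.2 - a := by
        have : a ≤ p.2 + p.1 := by omega
        push_cast [Nat.cast_sub this]; ring
      have hc2 : ((b - a : ℕ) : ℚ) = (b:ℚ) - a := by
        push_cast [Nat.cast_sub (le_of_lt hab)]; ring
      simp only [hc, hc2]
      have hba0 : (0:ℚ) < (b:ℚ) - a := by linarith
      field_simp
      ring

private lemma Sq_main : ∀ n, ∀ a b : ℕ, b ≤ n → 1 ≤ a → a < b → Nat.gcd a b = 1 →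
    Sq a b = ((a:ℚ)-1)*((b:ℚ)-1)*(2*(a:ℚ)*(b:ℚ) - a - b - 1) / (12*(a:ℚ)*(b:ℚ)) := by
  intro n
  induction n using Nat.strong_induction_on with
  | _ n ih =>
    intro a b hbn ha hab hg
    rcases eq_or_lt_of_le ha with h1 | h2
    · rw [← h1, Sq_one]
      norm_num [← h1]
    · have ha2 : 2 ≤ a := h2
      have ha0 : (0:ℚ) < a := by exact_mod_cast ha
      have hb0 : (0:ℚ) < b := by exact_mod_cast (by omega : 0 < b)
      have hab0 : (a:ℚ) < b := by exact_mod_cast hab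
      have hc2 : ((b - a : ℕ) : ℚ) = (b:ℚ) - a := by
        push_cast [Nat.cast_sub (le_of_lt hab)]; ring
      have hg' : Nat.gcd a (b - a) = 1 := by
        rw [Nat.gcd_sub_self_right (le_of_lt hab)]; exact hg
      have hb'1 : 1 ≤ b - a := by omega
      have hrec : Sq a (b - a)
          = ((a:ℚ)-1)*(((b:ℚ)-a)-1)*(2*(a:ℚ)*((b:ℚ)-a) - a - ((b:ℚ)-a) - 1)
            / (12*(a:ℚ)*((b:ℚ)-a)) := by
        rcases lt_trichotomy a (b - a) with h | h | h
        · have := ih (b - a) (by omega) a (b - a) (le_refl _) ha h hg'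
          rw [this, hc2]
        · exfalso
          have : Nat.gcd a (b - a) = a := by rw [← h]; exact Nat.gcd_self a
          omega
        · have := ih a (by omega) (b - a) a (le_refl _) hb'1 h
            (by rw [Nat.gcd_comm]; exact hg')
          rw [Sq_swap, this, hc2]
          ring
      rw [Sq_rec a b ha hab, tri a b ha hab, hrec]
      have hba0 : (0:ℚ) < (b:ℚ) - a := by linarith
      field_simp
      ring

theorem stmt_3 (a b : ℕ) (ha : 2 ≤ a) (hb : 3 ≤ b) (hab : Nat.gcd a b = 1) :
    ((a : ℚ) - 1) * ((b : ℚ) - 1) / 6 -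
        ∑ p ∈ (Finset.Icc 1 a ×ˢ Finset.Icc 1 b).filter
            (fun p => (p.1 : ℚ) / a + (p.2 : ℚ) / b < 1),
          (1 - (p.1 : ℚ) / a - (p.2 : ℚ) / b) =
      ((a : ℚ) - 1) * ((b : ℚ) - 1) * ((a : ℚ) + b + 1) / (12 * a * b) ∧
    (1 : ℚ) / 6 ≤ ((a : ℚ) - 1) * ((b : ℚ) - 1) * ((a : ℚ) + b + 1) / (12 * a * b) := by
  have ha0 : (0:ℚ) < a := by exact_mod_cast (by omega : 0 < a)
  have hb0 : (0:ℚ) < b := by exact_mod_cast (by omega : 0 < b)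
  have hne : a ≠ b := by
    intro h
    rw [h, Nat.gcd_self] at hab
    omega
  have hSq : Sq a b
      = ((a:ℚ)-1)*((b:ℚ)-1)*(2*(a:ℚ)*(b:ℚ) - a - b - 1) / (12*(a:ℚ)*(b:ℚ)) := by
    rcases lt_or_gt_of_ne hne with h | h
    · exact Sq_main b a b (le_refl _) (by omega) h hab
    · rw [Sq_swap]
      rw [Sq_main a b a (le_refl _) (by omega) h (by rw [Nat.gcd_comm]; exact hab)]
      ring
  constructor
  · have hsum : (∑ p ∈ (Finset.Icc 1 a ×ˢ Finset.Icc 1 b).filter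
            (fun p => (p.1 : ℚ) / a + (p.2 : ℚ) / b < 1),
          (1 - (p.1 : ℚ) / a - (p.2 : ℚ) / b)) = Sq a b := rfl
    rw [hsum, hSq]
    field_simp
    ring
  · rw [div_le_div_iff₀ (by norm_num) (by positivity)]
    have ha2 : (2:ℚ) ≤ a := by exact_mod_cast ha
    have hb3 : (3:ℚ) ≤ b := by exact_mod_cast hb
    nlinarith [mul_nonneg (mul_nonneg (by linarith : (0:ℚ) ≤ (a:ℚ)-2) (by linarith : (0:ℚ) ≤ (b:ℚ)-3)) (by linarith : (0:ℚ) ≤ (a:ℚ)-2),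
      mul_nonneg (mul_nonneg (by linarith : (0:ℚ) ≤ (a:ℚ)-2) (by linarith : (0:ℚ) ≤ (b:ℚ)-3)) (by linarith : (0:ℚ) ≤ (b:ℚ)-3),
      mul_nonneg (by linarith : (0:ℚ) ≤ (a:ℚ)-2) (by linarith : (0:ℚ) ≤ (b:ℚ)-3),
      mul_nonneg (mul_nonneg (by linarith : (0:ℚ) ≤ (a:ℚ)-2) (by linarith : (0:ℚ) ≤ (b:ℚ)-3)) (mul_nonneg (by linarith : (0:ℚ) ≤ (a:ℚ)-2) (by linarith : (0:ℚ) ≤ (b:ℚ)-3)),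
      sq_nonneg ((a:ℚ)-2), sq_nonneg ((b:ℚ)-3)]
end

section
/- Let a, b ≥ 2 be integers with k = gcd(a,b) ≥ 2, a = k·a', b = k·b'. Then (a-1)(b-1)/6 minus the sum of (1 - x/a - y/b) over positive integers x, y with x/a + y/b < 1 equals (a'+b')(k-1)/12 + (a'-1)(b'-1)(a'+b'+1)/(12 a' b'), and this quantity is at least 1/6. -/
open Finset

-- Gauss sums in ℚ
lemma sum_id_range (n : ℕ) : ∑ i ∈ range n, (i : ℚ) = n * (n - 1) / 2 := by
  induction n with
  | zero => simp
  | succ m ih => rw [Finset.sum_range_succ, ih]; push_cast; ring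

lemma sum_sq_range (n : ℕ) : ∑ i ∈ range n, (i : ℚ)^2 = n * (n - 1) * (2*n - 1) / 6 := by
  induction n with
  | zero => simp
  | succ m ih => rw [Finset.sum_range_succ, ih]; push_cast; ring

-- sum over range (k*n) of f (x % n)
lemma sum_mod_range (f : ℕ → ℚ) (k n : ℕ) :
    ∑ x ∈ range (k * n), f (x % n) = k * ∑ m ∈ range n, f m := by
  induction k with
  | zero => simp
  | succ j ih =>
    have h1 : (j+1) * n = j * n + n := by ring
    rw [h1, Finset.sum_range_add, ih]
    have h2 : ∀ i ∈ range n, f ((j * n + i) % n) = f i := by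
      intro i hi
      simp only [mem_range] at hi
      rw [Nat.add_mod, Nat.mul_mod_left, Nat.zero_add, Nat.mod_mod_of_dvd, Nat.mod_eq_of_lt hi]
      exact dvd_refl n
    rw [Finset.sum_congr rfl h2]
    push_cast; ring

-- permutation by coprime multiplier
lemma sum_coprime_perm (f : ℕ → ℚ) (c n : ℕ) (hn : 0 < n) (hc : Nat.Coprime c n) :
    ∑ m ∈ range n, f (c * m % n) = ∑ s ∈ range n, f s := by
  have hinj : Set.InjOn (fun m => c * m % n) (range n) := by
    intro m hm m' hm' h
    simp only [coe_range, Set.mem_Iio] at hm hm'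
    have : m % n = m' % n := Nat.ModEq.cancel_left_of_coprime (Nat.coprime_comm.mp hc) h
    rwa [Nat.mod_eq_of_lt hm, Nat.mod_eq_of_lt hm'] at this
  have hsub : image (fun m => c * m % n) (range n) ⊆ range n := by
    intro s hs
    simp only [mem_image, mem_range] at hs ⊢
    obtain ⟨m, _, rfl⟩ := hs
    exact Nat.mod_lt _ hn
  have hcard : (range n).card ≤ (image (fun m => c * m % n) (range n)).card := by
    rw [Finset.card_image_of_injOn hinj]
  have himg : image (fun m => c * m % n) (range n) = range n :=
    Finset.eq_of_subset_of_card_le hsub hcard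
  conv_rhs => rw [← himg]
  rw [Finset.sum_image (fun x hx y hy h => hinj (by simpa using hx) (by simpa using hy) h)]

lemma mod_sum_eval (f : ℕ → ℚ) (hf0 : f 0 = 0) (k n c : ℕ) (hk : 0 < k) (hn : 0 < n)
    (hcop : Nat.Coprime n c) :
    ∑ x ∈ Icc 1 (k*n - 1), f (k*c*x % (k*n)) = k * ∑ s ∈ range n, f (k*s) := by
  have hIcc : Icc 1 (k*n - 1) = (range (k*n)).erase 0 := by
    ext x; simp only [mem_Icc, mem_erase, mem_range]
    constructor
    · intro h; exact ⟨by omega, by omega⟩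
    · intro h; exact ⟨by omega, by omega⟩
  have hstep : ∀ x : ℕ, k*c*x % (k*n) = k * (c * (x % n) % n) := by
    intro x
    have h1 : k*c*x = k*(c*x) := by ring
    rw [h1, Nat.mul_mod_mul_left]
    congr 1
    exact (Nat.ModEq.mul_left c ((Nat.mod_modEq x n).symm) : _)
  have h0 : f (k*c*0 % (k*n)) = 0 := by
    rw [hstep]; simp [hf0]
  rw [hIcc, Finset.sum_erase _ (by simpa using h0)]
  have hcongr : ∑ x ∈ range (k*n), f (k*c*x % (k*n))
      = ∑ x ∈ range (k*n), (fun m => f (k * (c * m % n))) (x % n) := by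
    apply Finset.sum_congr rfl
    intro x _; rw [hstep]
  rw [hcongr, sum_mod_range (fun m => f (k * (c * m % n))) k n]
  congr 1
  exact sum_coprime_perm (fun t => f (k*t)) c n hn hcop.symm

lemma sum_Icc_id (n : ℕ) : ∑ y ∈ Icc 1 n, (y:ℚ) = n * (n+1) / 2 := by
  induction n with
  | zero => simp
  | succ m ih => rw [Finset.sum_Icc_succ_top (by omega), ih]; push_cast; ring

lemma sum_Icc_linear (M : ℕ) (c d : ℚ) :
    ∑ y ∈ Icc 1 M, (c - d * y) = M * c - d * (M*(M+1)/2) := by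
  rw [Finset.sum_sub_distrib, Finset.sum_const, ← Finset.mul_sum, sum_Icc_id]
  rw [Nat.card_Icc]
  simp only [nsmul_eq_mul]
  push_cast
  ring

lemma filter_eq_Icc (a b x : ℕ) (ha : 2 ≤ a) (hb : 2 ≤ b) (hx : 1 ≤ x) :
    (Icc 1 b).filter (fun y : ℕ => (x:ℚ)/a + (y:ℚ)/b < 1) = Icc 1 (b - 1 - b*x/a) := by
  have hA : (0:ℚ) < a := by exact_mod_cast (by omega : 0 < a)
  have hB : (0:ℚ) < b := by exact_mod_cast (by omega : 0 < b)
  have key : ∀ y : ℕ, ((x:ℚ)/a + (y:ℚ)/b < 1 ↔ b*x + a*y < a*b) := by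
    intro y
    rw [div_add_div _ _ (ne_of_gt hA) (ne_of_gt hB), div_lt_one (by positivity)]
    rw [show ((x:ℚ)*b + (a:ℚ)*y) = ((b*x + a*y : ℕ):ℚ) by push_cast; ring,
        show ((a:ℚ)*(b:ℚ)) = ((a*b : ℕ):ℚ) by push_cast; ring]
    exact Nat.cast_lt
  set q := b*x/a with hqdef
  have hd : a * q + b*x % a = b*x := Nat.div_add_mod (b*x) a
  have hr : b*x % a < a := Nat.mod_lt _ (by omega)
  ext y
  simp only [mem_filter, mem_Icc, key]
  constructor
  · rintro ⟨⟨hy1, hy2⟩, hlt⟩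
    refine ⟨hy1, ?_⟩
    have h1 : a*(q+y) < a*b := by
      calc a*(q+y) = a*q + a*y := by ring
        _ ≤ a*q + b*x % a + a*y := by omega
        _ = b*x + a*y := by omega
        _ < a*b := hlt
    have h2 : q + y < b := Nat.lt_of_mul_lt_mul_left h1
    omega
  · rintro ⟨hy1, hy2⟩
    have h2 : q + y + 1 ≤ b := by omega
    have h3 : a*(q+y+1) ≤ a*b := Nat.mul_le_mul_left a h2
    refine ⟨⟨hy1, le_trans hy2 (le_trans (Nat.sub_le _ _) (Nat.sub_le _ _))⟩, ?_⟩
    calc b*x + a*y = a*q + b*x%a + a*y := by omega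
      _ < a*(q+y+1) := by have : a*(q+y+1) = a*q + a*y + a := by ring
                          omega
      _ ≤ a*b := h3

lemma sum_Icc_sq (n : ℕ) : ∑ y ∈ Icc 1 n, (y:ℚ)^2 = n * (n+1) * (2*n+1) / 6 := by
  induction n with
  | zero => simp
  | succ m ih => rw [Finset.sum_Icc_succ_top (by omega), ih]; push_cast; ring

lemma term_eval (a b x : ℕ) (ha : 2 ≤ a) (hb : 2 ≤ b) (hx2 : x ≤ a - 1) :
    ((b - 1 - b*x/a : ℕ):ℚ) * (1 - (x:ℚ)/a)
      - (1/(b:ℚ)) * (((b - 1 - b*x/a : ℕ):ℚ) * (((b - 1 - b*x/a : ℕ):ℚ)+1)/2)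
    = ((b:ℚ)-1)/2 - (2*(b:ℚ)-1)/(2*a) * x + (b:ℚ)/(2*(a:ℚ)^2) * (x:ℚ)^2
      - (1/(2*(a:ℚ)^2*b)) * ((b*x%a : ℕ):ℚ)^2 + (1/(2*(a:ℚ)*b)) * ((b*x%a : ℕ):ℚ) := by
  have hA : (0:ℚ) < a := by exact_mod_cast (by omega : 0 < a)
  have hB : (0:ℚ) < b := by exact_mod_cast (by omega : 0 < b)
  set q := b*x/a with hqdef
  set r := b*x%a with hrdef
  have hd : a * q + r = b*x := Nat.div_add_mod (b*x) a
  have hqb : q < b := by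
    have hxa : x < a := by omega
    have h1 : b*x < b*a := Nat.mul_lt_mul_of_le_of_lt (le_refl b) hxa (by omega)
    rw [hqdef, Nat.div_lt_iff_lt_mul (by omega : 0 < a)]
    omega
  have hMc : ((b - 1 - q : ℕ) : ℚ) = (b:ℚ) - 1 - (q:ℚ) := by
    have h1 : q ≤ b - 1 := by omega
    have h2 : (1:ℕ) ≤ b := by omega
    push_cast [Nat.cast_sub h1, Nat.cast_sub h2]
    ring
  have hdc : (a:ℚ) * q + r = (b:ℚ)*x := by exact_mod_cast congrArg (Nat.cast : ℕ → ℚ) hd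
  have hQ : (q:ℚ) = ((b:ℚ)*x - r)/a := by
    field_simp
    linarith
  rw [hMc, hQ]
  field_simp
  ring

lemma S_eval (a b a' b' k : ℕ) (ha : 2 ≤ a) (hb : 2 ≤ b) (hk : 2 ≤ k)
    (ha' : a = k * a') (hb' : b = k * b') (hcop : Nat.Coprime a' b') :
    ∑ p ∈ (Finset.Icc 1 a ×ˢ Finset.Icc 1 b).filter
        (fun p => (p.1 : ℚ) / a + (p.2 : ℚ) / b < 1),
      (1 - (p.1 : ℚ) / a - (p.2 : ℚ) / b)
    = ((b:ℚ)-1)/2 * ((a:ℚ)-1) - (2*(b:ℚ)-1)/(2*a) * ((a:ℚ)*((a:ℚ)-1)/2)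
      + (b:ℚ)/(2*(a:ℚ)^2) * ((a:ℚ)*((a:ℚ)-1)*(2*(a:ℚ)-1)/6)
      - (1/(2*(a:ℚ)^2*b)) * ((k:ℚ)^3 * a' * ((a':ℚ)-1) * (2*(a':ℚ)-1)/6)
      + (1/(2*(a:ℚ)*b)) * ((k:ℚ)^2 * a' * ((a':ℚ)-1)/2) := by
  have ha'1 : 1 ≤ a' := by
    rcases Nat.eq_zero_or_pos a' with h | h
    · subst h; omega
    · exact h
  -- step 1: iterate the sum
  rw [Finset.sum_filter, Finset.sum_product]
  have step2 : ∀ x ∈ Icc 1 a,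
      (∑ y ∈ Icc 1 b, if (x:ℚ)/a + (y:ℚ)/b < 1 then (1 - (x:ℚ)/a - (y:ℚ)/b) else 0)
      = ((b - 1 - b*x/a : ℕ):ℚ) * (1 - (x:ℚ)/a)
        - (1/(b:ℚ)) * (((b - 1 - b*x/a : ℕ):ℚ) * (((b - 1 - b*x/a : ℕ):ℚ)+1)/2) := by
    intro x hx
    rw [← Finset.sum_filter, filter_eq_Icc a b x ha hb (mem_Icc.mp hx).1]
    calc ∑ y ∈ Icc 1 (b-1-b*x/a), (1 - (x:ℚ)/a - (y:ℚ)/b)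
        = ∑ y ∈ Icc 1 (b-1-b*x/a), ((1 - (x:ℚ)/a) - (1/(b:ℚ)) * (y:ℚ)) :=
          Finset.sum_congr rfl (fun y _ => by ring)
      _ = _ := by rw [sum_Icc_linear]
  rw [Finset.sum_congr rfl step2]
  -- split off x = a
  have hsplit : Icc 1 a = insert a (Icc 1 (a-1)) := by
    ext t; simp only [mem_Icc, mem_insert]; omega
  rw [hsplit, Finset.sum_insert (by simp only [mem_Icc]; omega)]
  have htopM : b - 1 - b*a/a = 0 := by
    rw [Nat.mul_div_cancel _ (by omega : 0 < a)]; omega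
  rw [htopM]
  rw [show (((0:ℕ):ℚ) * (1 - (a:ℚ)/a) - (1/(b:ℚ)) * (((0:ℕ):ℚ) * (((0:ℕ):ℚ)+1)/2)) = 0
    by norm_num, zero_add]
  -- per-x closed form
  rw [Finset.sum_congr rfl (fun x hx =>
    term_eval a b x ha hb (mem_Icc.mp hx).2)]
  -- linearity
  simp only [Finset.sum_add_distrib, Finset.sum_sub_distrib, ← Finset.mul_sum,
    Finset.sum_const, Nat.card_Icc, Nat.add_sub_cancel, nsmul_eq_mul]
  -- evaluate the four sums
  have e1 : ∑ x ∈ Icc 1 (a-1), (x:ℚ) = (a:ℚ)*((a:ℚ)-1)/2 := by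
    rw [sum_Icc_id, Nat.cast_sub (by omega : 1 ≤ a)]
    push_cast; ring
  have e2 : ∑ x ∈ Icc 1 (a-1), (x:ℚ)^2 = (a:ℚ)*((a:ℚ)-1)*(2*(a:ℚ)-1)/6 := by
    rw [sum_Icc_sq, Nat.cast_sub (by omega : 1 ≤ a)]
    push_cast; ring
  have e3 : ∑ x ∈ Icc 1 (a-1), ((b*x%a : ℕ):ℚ) = (k:ℚ)^2 * a' * ((a':ℚ)-1)/2 := by
    rw [ha', hb']
    rw [mod_sum_eval (fun m => (m:ℚ)) (by norm_num) k a' b' (by omega)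
      (by omega) hcop]
    have : ∑ s ∈ range a', ((k*s : ℕ):ℚ) = (k:ℚ) * ∑ s ∈ range a', (s:ℚ) := by
      rw [Finset.mul_sum]; exact Finset.sum_congr rfl (fun s _ => by push_cast; ring)
    rw [this, sum_id_range]; ring
  have e4 : ∑ x ∈ Icc 1 (a-1), ((b*x%a : ℕ):ℚ)^2 = (k:ℚ)^3 * a' * ((a':ℚ)-1)*(2*(a':ℚ)-1)/6 := by
    rw [ha', hb']
    rw [mod_sum_eval (fun m => (m:ℚ)^2) (by norm_num) k a' b' (by omega)
      (by omega) hcop]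
    have : ∑ s ∈ range a', ((k*s : ℕ):ℚ)^2 = (k:ℚ)^2 * ∑ s ∈ range a', (s:ℚ)^2 := by
      rw [Finset.mul_sum]; exact Finset.sum_congr rfl (fun s _ => by push_cast; ring)
    rw [this, sum_sq_range]; ring
  rw [e1, e2, e3, e4, Nat.cast_sub (by omega : 1 ≤ a)]
  push_cast
  ring

theorem stmt_4 (a b a' b' : ℕ) (ha : 2 ≤ a) (hb : 2 ≤ b)
    (hk : 2 ≤ Nat.gcd a b)
    (ha' : a = Nat.gcd a b * a') (hb' : b = Nat.gcd a b * b') :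
    ((a : ℚ) - 1) * ((b : ℚ) - 1) / 6 -
        ∑ p ∈ (Finset.Icc 1 a ×ˢ Finset.Icc 1 b).filter
            (fun p => (p.1 : ℚ) / a + (p.2 : ℚ) / b < 1),
          (1 - (p.1 : ℚ) / a - (p.2 : ℚ) / b) =
      ((a' : ℚ) + b') * ((Nat.gcd a b : ℚ) - 1) / 12 +
        ((a' : ℚ) - 1) * ((b' : ℚ) - 1) * ((a' : ℚ) + b' + 1) / (12 * a' * b') ∧
    (1 : ℚ) / 6 ≤ ((a' : ℚ) + b') * ((Nat.gcd a b : ℚ) - 1) / 12 +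
        ((a' : ℚ) - 1) * ((b' : ℚ) - 1) * ((a' : ℚ) + b' + 1) / (12 * a' * b') := by
  have ha'1 : 1 ≤ a' := by
    rcases Nat.eq_zero_or_pos a' with h | h
    · subst h; omega
    · exact h
  have hb'1 : 1 ≤ b' := by
    rcases Nat.eq_zero_or_pos b' with h | h
    · subst h; omega
    · exact h
  have hcop : Nat.Coprime a' b' := by
    have h := Nat.gcd_mul_left (Nat.gcd a b) a' b'
    rw [← ha', ← hb'] at h
    have h2 : Nat.gcd a b * 1 = Nat.gcd a b * Nat.gcd a' b' := by rw [mul_one]; exact h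
    exact (Nat.eq_of_mul_eq_mul_left (by omega) h2).symm
  have hKq : (2:ℚ) ≤ (Nat.gcd a b : ℚ) := by exact_mod_cast hk
  have ha'q : (1:ℚ) ≤ (a' : ℚ) := by exact_mod_cast ha'1
  have hb'q : (1:ℚ) ≤ (b' : ℚ) := by exact_mod_cast hb'1
  constructor
  · rw [S_eval a b a' b' (Nat.gcd a b) ha hb hk ha' hb' hcop]
    have hac : (a:ℚ) = (Nat.gcd a b : ℚ) * a' := by exact_mod_cast congrArg (Nat.cast : ℕ → ℚ) ha'
    have hbc : (b:ℚ) = (Nat.gcd a b : ℚ) * b' := by exact_mod_cast congrArg (Nat.cast : ℕ → ℚ) hb'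
    rw [hac, hbc]
    have h1 : ((Nat.gcd a b : ℕ):ℚ) ≠ 0 := by
      intro h; rw [h] at hKq; norm_num at hKq
    have h2 : (a':ℚ) ≠ 0 := by intro h; rw [h] at ha'q; norm_num at ha'q
    have h3 : (b':ℚ) ≠ 0 := by intro h; rw [h] at hb'q; norm_num at hb'q
    field_simp
    ring
  · have t2 : (0:ℚ) ≤ ((a' : ℚ) - 1) * ((b' : ℚ) - 1) * ((a' : ℚ) + b' + 1) / (12 * a' * b') := by
      apply div_nonneg
      · exact mul_nonneg (mul_nonneg (by linarith) (by linarith)) (by linarith)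
      · nlinarith
    have t1 : (1:ℚ)/6 ≤ ((a' : ℚ) + b') * ((Nat.gcd a b : ℚ) - 1) / 12 := by
      rw [div_le_div_iff₀ (by norm_num) (by norm_num)]
      nlinarith
    linarith
end

section
/- For a fixed n ≥ 1, the ratio p̃_g(d)/μ(d) = [(d-1)(d-2)...(d-(n+1))/(n+2)!] / (d-1)^{n+1} is strictly increasing in d for d > n+1 and converges to 1/(n+2)! as d → ∞; in particular p̃_g(d) ≤ (μ(d) - 1)/(n+2)! for all d ≥ 2. -/
open Finset Filter

theorem stmt_7 (n : ℕ) (hn : 1 ≤ n) :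
    (∀ d₁ d₂ : ℕ, n + 1 < d₁ → d₁ < d₂ →
      (∏ i ∈ Finset.Icc 1 (n + 1), ((d₁ : ℝ) - i)) / (Nat.factorial (n + 2)) /
          ((d₁ : ℝ) - 1) ^ (n + 1) <
        (∏ i ∈ Finset.Icc 1 (n + 1), ((d₂ : ℝ) - i)) / (Nat.factorial (n + 2)) /
          ((d₂ : ℝ) - 1) ^ (n + 1)) ∧
    Tendsto (fun d : ℕ =>
        (∏ i ∈ Finset.Icc 1 (n + 1), ((d : ℝ) - i)) / (Nat.factorial (n + 2)) /
          ((d : ℝ) - 1) ^ (n + 1)) atTop (nhds (1 / (Nat.factorial (n + 2)))) ∧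
    (∀ d : ℕ, 2 ≤ d →
      (∏ i ∈ Finset.Icc 1 (n + 1), ((d : ℝ) - i)) / (Nat.factorial (n + 2)) ≤
        (((d : ℝ) - 1) ^ (n + 1) - 1) / (Nat.factorial (n + 2))) := by
  have hF : (0:ℝ) < (Nat.factorial (n+2) : ℝ) := by positivity
  have hcard : (Finset.Icc 1 (n+1)).card = n + 1 := by
    rw [Nat.card_Icc]; omega
  have h2mem : 2 ∈ Finset.Icc 1 (n+1) := by
    rw [Finset.mem_Icc]; omega
  refine ⟨?_, ?_, ?_⟩
  · intro d₁ d₂ h1 h2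
    have hd1 : (n:ℝ) + 1 < (d₁:ℝ) := by exact_mod_cast h1
    have hd2 : (d₁:ℝ) < (d₂:ℝ) := by exact_mod_cast h2
    have hn1 : (1:ℝ) ≤ (n:ℝ) := by exact_mod_cast hn
    have hp1 : (0:ℝ) < ((d₁:ℝ) - 1) ^ (n+1) := by
      apply pow_pos; linarith
    have hp2 : (0:ℝ) < ((d₂:ℝ) - 1) ^ (n+1) := by
      apply pow_pos; linarith
    rw [div_div, div_div, div_lt_div_iff₀ (by positivity) (by positivity)]
    have key : (∏ i ∈ Finset.Icc 1 (n + 1), ((d₁ : ℝ) - i)) * ((d₂:ℝ) - 1) ^ (n+1) <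
        (∏ i ∈ Finset.Icc 1 (n + 1), ((d₂ : ℝ) - i)) * ((d₁:ℝ) - 1) ^ (n+1) := by
      rw [show ((d₂:ℝ) - 1) ^ (n+1) = ∏ _i ∈ Finset.Icc 1 (n+1), ((d₂:ℝ) - 1) by
            rw [Finset.prod_const, hcard],
          show ((d₁:ℝ) - 1) ^ (n+1) = ∏ _i ∈ Finset.Icc 1 (n+1), ((d₁:ℝ) - 1) by
            rw [Finset.prod_const, hcard],
          ← Finset.prod_mul_distrib, ← Finset.prod_mul_distrib]
      apply Finset.prod_lt_prod
      · intro i hi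
        rw [Finset.mem_Icc] at hi
        have : (i:ℝ) ≤ (n:ℝ) + 1 := by exact_mod_cast hi.2
        have : (1:ℝ) ≤ (i:ℝ) := by exact_mod_cast hi.1
        apply mul_pos <;> nlinarith
      · intro i hi
        rw [Finset.mem_Icc] at hi
        have : (i:ℝ) ≤ (n:ℝ) + 1 := by exact_mod_cast hi.2
        have : (1:ℝ) ≤ (i:ℝ) := by exact_mod_cast hi.1
        nlinarith
      · refine ⟨2, h2mem, ?_⟩
        push_cast
        nlinarith
    nlinarith [mul_lt_mul_of_pos_left key hF]
  · have hratio : ∀ i ∈ Finset.Icc 1 (n+1),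
        Tendsto (fun d : ℕ => ((d:ℝ) - i) / ((d:ℝ) - 1)) atTop (nhds 1) := by
      intro i _
      have h1 : Tendsto (fun d : ℕ => (d:ℝ) - 1) atTop atTop := by
        simp only [sub_eq_add_neg]
        exact tendsto_atTop_add_const_right _ (-1) tendsto_natCast_atTop_atTop
      have h2 : Tendsto (fun d : ℕ => 1 + ((1:ℝ) - i) * ((d:ℝ) - 1)⁻¹) atTop
          (nhds (1 + ((1:ℝ) - i) * 0)) := by
        exact tendsto_const_nhds.add (tendsto_const_nhds.mul h1.inv_tendsto_atTop)
      simp only [mul_zero, add_zero] at h2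
      apply h2.congr'
      filter_upwards [eventually_ge_atTop 2] with d hd
      have : ((d:ℝ) - 1) ≠ 0 := by
        have : (2:ℝ) ≤ (d:ℝ) := by exact_mod_cast hd
        intro h; linarith [sub_eq_zero.mp h]
      field_simp
      ring
    have hprod : Tendsto (fun d : ℕ => ∏ i ∈ Finset.Icc 1 (n+1), ((d:ℝ) - i) / ((d:ℝ) - 1))
        atTop (nhds (∏ _i ∈ Finset.Icc 1 (n+1), (1:ℝ))) :=
      tendsto_finset_prod _ hratio
    rw [Finset.prod_const_one] at hprod
    have := hprod.div_const ((Nat.factorial (n+2) : ℝ))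
    apply this.congr'
    filter_upwards [eventually_ge_atTop 2] with d hd
    have h2d : (2:ℝ) ≤ (d:ℝ) := by exact_mod_cast hd
    have hne : ((d:ℝ) - 1) ≠ 0 := by intro h; linarith [sub_eq_zero.mp h]
    rw [Finset.prod_div_distrib, Finset.prod_const, hcard]
    rw [div_div, div_div, mul_comm]
  · intro d hd
    have h2d : (2:ℝ) ≤ (d:ℝ) := by exact_mod_cast hd
    have key : (∏ i ∈ Finset.Icc 1 (n + 1), ((d : ℝ) - i)) ≤ ((d:ℝ) - 1) ^ (n+1) - 1 := by
      rcases le_or_gt d (n+1) with hle | hlt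
      · have hmem : d ∈ Finset.Icc 1 (n+1) := by rw [Finset.mem_Icc]; omega
        rw [Finset.prod_eq_zero hmem (by ring)]
        have : (1:ℝ) ≤ ((d:ℝ) - 1) ^ (n+1) := one_le_pow₀ (by linarith)
        linarith
      · have hnat : (∏ i ∈ Finset.Icc 1 (n+1), (d - i)) < (d - 1) ^ (n+1) := by
          rw [show (d-1)^(n+1) = ∏ _i ∈ Finset.Icc 1 (n+1), (d - 1) by
            rw [Finset.prod_const, hcard]]
          apply Finset.prod_lt_prod
          · intro i hi; rw [Finset.mem_Icc] at hi; omega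
          · intro i hi; rw [Finset.mem_Icc] at hi; omega
          · exact ⟨2, h2mem, by omega⟩
        have hcast : (∏ i ∈ Finset.Icc 1 (n + 1), ((d : ℝ) - i)) =
            ((∏ i ∈ Finset.Icc 1 (n+1), (d - i) : ℕ) : ℝ) := by
          rw [Nat.cast_prod]
          apply Finset.prod_congr rfl
          intro i hi
          rw [Finset.mem_Icc] at hi
          rw [Nat.cast_sub (by omega)]
        have hcast2 : ((d:ℝ) - 1) ^ (n+1) = (((d - 1)^(n+1) : ℕ) : ℝ) := by
          push_cast [Nat.cast_sub (by omega : 1 ≤ d)]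
          ring
        rw [hcast, hcast2]
        have := Nat.succ_le_of_lt hnat
        have : ((∏ i ∈ Finset.Icc 1 (n+1), (d - i) : ℕ) : ℝ) + 1 ≤
            (((d - 1)^(n+1) : ℕ) : ℝ) := by exact_mod_cast this
        linarith
    gcongr
end

section
/- Let a, b ≥ 2 be integers. The sum of (1 - x/(a+1) - a·y/((a+1)b)) over positive integer lattice points (x, y) strictly inside the triangle with vertices (0,0), (a+1, 0), (1, b) satisfies: μ/6 - S ≥ 1/6, where μ = (a+1)(b-1) + 1 and S is that sum. -/
open Finset

private lemma gauss1 (n : ℕ) : ∑ x ∈ Icc 1 n, (x:ℚ) = n*(n+1)/2 := by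
  induction n with
  | zero => simp
  | succ k ih =>
    rw [Finset.sum_Icc_succ_top (Nat.succ_le_succ (Nat.zero_le k)), ih]
    push_cast; ring

private lemma gauss2 (n : ℕ) : ∑ x ∈ Icc 1 n, (x:ℚ)^2 = n*(n+1)*(2*n+1)/6 := by
  induction n with
  | zero => simp
  | succ k ih =>
    rw [Finset.sum_Icc_succ_top (Nat.succ_le_succ (Nat.zero_le k)), ih]
    push_cast; ring

private lemma final_ineq (A B : ℚ) (hA : 2 ≤ A) (hB : 2 ≤ B) :
    B*(2*B*(A+1)-B)^2 - 2*(2*B*(A+1)-B)*(2*A)*(B*(B+1)/2) + 4*A^2*(B*(B+1)*(2*B+1)/6)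
      ≤ 8*(A+1)*B^2*((A+1)*(B-1)/6) := by
  have hu : (0:ℚ) ≤ A - 2 := by linarith
  have hv : (0:ℚ) ≤ B - 2 := by linarith
  nlinarith [mul_nonneg hu hv, mul_nonneg hu (pow_nonneg hv 2),
    mul_nonneg hu (pow_nonneg hv 3), mul_nonneg (pow_nonneg hu 2) hv,
    mul_nonneg (pow_nonneg hu 2) (pow_nonneg hv 2), pow_nonneg hv 3,
    pow_nonneg hv 2, pow_nonneg hu 2, hu, hv]

theorem stmt_10 (a b : ℕ) (ha : 2 ≤ a) (hb : 2 ≤ b) :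
    ((((a : ℚ) + 1) * ((b : ℚ) - 1) + 1) / 6) -
      ∑ p ∈ (Finset.Icc 1 (a + 1) ×ˢ Finset.Icc 1 b).filter
          (fun p => p.2 < b * p.1 ∧ b * p.1 + a * p.2 < b * (a + 1)),
        (1 - (p.1 : ℚ) / (a + 1) - (a : ℚ) * p.2 / ((a + 1) * b)) ≥ 1 / 6 := by
  have hb' : 0 < b := by omega
  have hA : (2:ℚ) ≤ (a:ℚ) := by exact_mod_cast ha
  have hB : (2:ℚ) ≤ (b:ℚ) := by exact_mod_cast hb
  have hA0 : (0:ℚ) < (a:ℚ) + 1 := by linarith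
  have hB0 : (0:ℚ) < (b:ℚ) := by linarith
  have key : ∑ p ∈ (Finset.Icc 1 (a + 1) ×ˢ Finset.Icc 1 b).filter
          (fun p => p.2 < b * p.1 ∧ b * p.1 + a * p.2 < b * (a + 1)),
        (1 - (p.1 : ℚ) / (a + 1) - (a : ℚ) * p.2 / ((a + 1) * b))
      ≤ ((a:ℚ)+1)*((b:ℚ)-1)/6 := by
    rw [Finset.sum_filter, Finset.sum_product_right]
    have inner_bound : ∀ y ∈ Icc 1 b,
        (∑ x ∈ Icc 1 (a+1), if (x, y).2 < b * (x, y).1 ∧ b * (x, y).1 + a * (x, y).2 < b * (a + 1)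
            then (1 - ((x, y).1 : ℚ) / (a + 1) - (a : ℚ) * (x, y).2 / ((a + 1) * b)) else 0)
        ≤ (2*(b:ℚ)*((a:ℚ)+1) - 2*a*y - b)^2 / (8*((a:ℚ)+1)*(b:ℚ)^2) := by
      intro y hy
      simp only [Finset.mem_Icc] at hy
      obtain ⟨hy1, hy2⟩ := hy
      set n : ℕ := (a*b + b - 1 - a*y)/b with hn
      have hay : a*y ≤ a*b := Nat.mul_le_mul_left a hy2
      have hab : b*(a+1) = a*b + b := by ring
      have hx : ∀ x : ℕ, (x ≤ n ↔ b*x + a*y < b*(a+1)) := by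
        intro x
        rw [hn, Nat.le_div_iff_mul_le hb']
        have h4 : x*b = b*x := Nat.mul_comm x b
        omega
      have hna : n ≤ a := by
        have h2 : a*b + b - 1 - a*y < (a+1)*b := by
          have : (a+1)*b = a*b + b := by ring
          omega
        have := (Nat.div_lt_iff_lt_mul hb').mpr h2
        omega
      have hfil : (Icc 1 (a+1)).filter
          (fun x => (x, y).2 < b * (x, y).1 ∧ b * (x, y).1 + a * (x, y).2 < b * (a + 1))
          = Icc 1 n := by
        ext x
        simp only [Finset.mem_filter, Finset.mem_Icc]
        constructor
        · rintro ⟨⟨hx1, _⟩, _, h2⟩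
          exact ⟨hx1, (hx x).mpr h2⟩
        · rintro ⟨hx1, hx2⟩
          have h2 := (hx x).mp hx2
          have hyb : y < b := by
            have hbx : b*1 ≤ b*x := Nat.mul_le_mul_left b hx1
            have : a*y < a*b := by omega
            exact Nat.lt_of_mul_lt_mul_left this
          have hybx : y < b*x := by
            have hbx : b*1 ≤ b*x := Nat.mul_le_mul_left b hx1
            omega
          exact ⟨⟨hx1, by omega⟩, hybx, h2⟩
      calc (∑ x ∈ Icc 1 (a+1), if (x, y).2 < b * (x, y).1 ∧ b * (x, y).1 + a * (x, y).2 < b * (a + 1)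
            then (1 - ((x, y).1 : ℚ) / (a + 1) - (a : ℚ) * (x, y).2 / ((a + 1) * b)) else 0)
          = ∑ x ∈ Icc 1 n, (1 - (x : ℚ) / (a + 1) - (a : ℚ) * y / ((a + 1) * b)) := by
            rw [← Finset.sum_filter, hfil]
        _ = (n:ℚ) - ((n:ℚ)*(n+1)/2)/((a:ℚ)+1) - (n:ℚ)*((a:ℚ)*y/(((a:ℚ)+1)*(b:ℚ))) := by
            rw [Finset.sum_sub_distrib, Finset.sum_sub_distrib, ← Finset.sum_div, gauss1,
              Finset.sum_const, Finset.sum_const, Nat.card_Icc]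
            simp only [Nat.add_sub_cancel, nsmul_eq_mul, mul_one]
            try ring
        _ ≤ (2*(b:ℚ)*((a:ℚ)+1) - 2*a*y - b)^2 / (8*((a:ℚ)+1)*(b:ℚ)^2) := by
            rw [le_div_iff₀ (by positivity)]
            have expand : ((n:ℚ) - ((n:ℚ)*(n+1)/2)/((a:ℚ)+1) - (n:ℚ)*((a:ℚ)*y/(((a:ℚ)+1)*(b:ℚ))))
                * (8*((a:ℚ)+1)*(b:ℚ)^2)
                = (2*(b:ℚ)*((a:ℚ)+1) - 2*a*y - b)^2
                  - ((2*(b:ℚ)*((a:ℚ)+1) - 2*a*y - b) - 2*b*n)^2 := by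
              field_simp
              ring
            rw [expand]
            nlinarith [sq_nonneg ((2*(b:ℚ)*((a:ℚ)+1) - 2*a*y - b) - 2*b*(n:ℚ))]
    calc _ ≤ ∑ y ∈ Icc 1 b, (2*(b:ℚ)*((a:ℚ)+1) - 2*a*y - b)^2 / (8*((a:ℚ)+1)*(b:ℚ)^2) :=
          Finset.sum_le_sum inner_bound
      _ = (∑ y ∈ Icc 1 b, (2*(b:ℚ)*((a:ℚ)+1) - 2*a*y - b)^2) / (8*((a:ℚ)+1)*(b:ℚ)^2) := by
          rw [Finset.sum_div]
      _ ≤ ((a:ℚ)+1)*((b:ℚ)-1)/6 := by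
          rw [div_le_iff₀ (by positivity)]
          have hsum : ∑ y ∈ Icc 1 b, (2*(b:ℚ)*((a:ℚ)+1) - 2*a*y - b)^2
              = (b:ℚ)*(2*(b:ℚ)*((a:ℚ)+1)-(b:ℚ))^2
                - 2*(2*(b:ℚ)*((a:ℚ)+1)-(b:ℚ))*(2*(a:ℚ))*((b:ℚ)*((b:ℚ)+1)/2)
                + 4*(a:ℚ)^2*((b:ℚ)*((b:ℚ)+1)*(2*(b:ℚ)+1)/6) := by
            have : ∀ y ∈ Icc 1 b, (2*(b:ℚ)*((a:ℚ)+1) - 2*a*y - b)^2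
                = (2*(b:ℚ)*((a:ℚ)+1)-(b:ℚ))^2
                  - 2*(2*(b:ℚ)*((a:ℚ)+1)-(b:ℚ))*(2*(a:ℚ))*(y:ℚ)
                  + 4*(a:ℚ)^2*(y:ℚ)^2 := by
              intro y _; ring
            rw [Finset.sum_congr rfl this, Finset.sum_add_distrib, Finset.sum_sub_distrib,
              ← Finset.mul_sum, ← Finset.mul_sum, gauss1, gauss2, Finset.sum_const,
              Nat.card_Icc]
            simp only [Nat.add_sub_cancel, nsmul_eq_mul, mul_one]
            try ring
          rw [hsum]
          have := final_ineq (a:ℚ) (b:ℚ) hA hB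
          linarith
  linarith
end

section
/- Let a, b ≥ 2 be integers and set N = (a+1)(b+1) - 1. The sum of (1 - (bx + ay)/N) over integer points (x,y) with x,y ≥ 1 lying in the closed triangle with vertices (1,1), (a+1,1), (1,b+1) but not on the hypotenuse, satisfies μ/6 - S ≥ 1/6, where μ = (a+1)(b+1). -/
open Finset


lemma sum_range_cast_q (n : ℕ) : ∑ i ∈ range n, (i:ℚ) = n*(n-1)/2 := by
  induction n with
  | zero => simp
  | succ k ih => rw [Finset.sum_range_succ, ih]; push_cast; ring

lemma sum_sq_aff (a b n : ℕ) : ∑ j ∈ range n, (2*(b:ℚ)*j + a)^2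
    = 4*(b:ℚ)^2*((n:ℚ)*(n-1)*(2*n-1))/6 + 4*(a:ℚ)*b*((n:ℚ)*(n-1))/2 + n*(a:ℚ)^2 := by
  induction n with
  | zero => simp
  | succ k ih => rw [Finset.sum_range_succ, ih]; push_cast; ring

lemma inner_bound (a M n : ℕ) (ha : 0 < a) :
    ∑ v ∈ range n, (if a * v < M then (M:ℚ) - a * v else 0)
      ≤ (2*(M:ℚ)+a)^2/(8*a) := by
  rw [← Finset.sum_filter]
  have hsub : (range n).filter (fun v => a*v < M) ⊆ range (M/a + 1) := by
    intro v hv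
    simp only [mem_filter, mem_range] at hv ⊢
    have : v * a ≤ M := le_of_lt (by rw [mul_comm]; exact hv.2)
    exact Nat.lt_succ_of_le ((Nat.le_div_iff_mul_le ha).2 this)
  have hle : ∑ v ∈ (range n).filter (fun v => a*v < M), ((M:ℚ) - a*v)
      ≤ ∑ v ∈ range (M/a+1), ((M:ℚ) - a*v) := by
    apply Finset.sum_le_sum_of_subset_of_nonneg hsub
    intro v hv _
    simp only [mem_range] at hv
    have h1 : v ≤ M/a := Nat.lt_succ_iff.mp hv
    have h2 : a * v ≤ M := by
      calc a * v ≤ a * (M/a) := Nat.mul_le_mul_left a h1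
        _ ≤ M := Nat.mul_div_le M a
    have : (a:ℚ) * v ≤ M := by exact_mod_cast h2
    linarith
  refine hle.trans ?_
  have hcomp : ∑ v ∈ range (M/a+1), ((M:ℚ) - a*v)
      = ((M/a+1 : ℕ):ℚ) * M - a * (((M/a+1:ℕ):ℚ) * (((M/a+1:ℕ):ℚ) - 1) / 2) := by
    rw [Finset.sum_sub_distrib, Finset.sum_const, nsmul_eq_mul, ← Finset.mul_sum,
      sum_range_cast_q]
    simp
  rw [hcomp, le_div_iff₀ (by positivity : (0:ℚ) < 8*a)]
  nlinarith [sq_nonneg (2*(M:ℚ) + a - 2*a*((M/a+1:ℕ):ℚ)), (Nat.cast_pos (α := ℚ)).mpr ha,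
    sq_nonneg ((M:ℚ) - a*((M/a+1:ℕ):ℚ))]



theorem stmt_11 (a b : ℕ) (ha : 2 ≤ a) (hb : 2 ≤ b) :
    (((a : ℚ) + 1) * ((b : ℚ) + 1)) / 6 -
      ∑ p ∈ (Finset.Icc 1 (a + 1) ×ˢ Finset.Icc 1 (b + 1)).filter
          (fun p => b * p.1 + a * p.2 < (a + 1) * (b + 1) - 1),
        (1 - ((b : ℚ) * p.1 + (a : ℚ) * p.2) / ((a + 1) * (b + 1) - 1)) ≥ 1 / 6 := by
  have ha0 : 0 < a := by omega
  set N : ℕ := (a+1)*(b+1)-1 with hN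
  have hNval : N = a*b + a + b := by
    have h : (a+1)*(b+1) = a*b+a+b+1 := by ring
    omega
  have hNq : ((a:ℚ)+1)*((b:ℚ)+1) - 1 = (N:ℚ) := by rw [hNval]; push_cast; ring
  have hN0 : (N:ℚ) ≠ 0 := by
    have : 0 < N := by omega
    positivity
  -- inner bound for each column x
  have key : ∀ x ∈ Icc 1 (a+1),
      ∑ y ∈ Icc 1 (b+1), (if b*x + a*y < N then (N:ℚ) - ((b:ℚ)*x + (a:ℚ)*y) else 0)
      ≤ (2*((b*(a+1-x):ℕ):ℚ) + a)^2/(8*a) := by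
    intro x hx
    simp only [mem_Icc] at hx
    have hkey : b*x + a + b*(a+1-x) = N := by
      have h1 : b*(a+1-x) = b*(a+1) - b*x := by rw [Nat.mul_sub]
      have h2 : b*x ≤ b*(a+1) := Nat.mul_le_mul_left b hx.2
      have h3 : (a+1)*(b+1) = b*(a+1) + a + 1 := by ring
      omega
    rw [← Finset.Ico_add_one_right_eq_Icc, Finset.sum_Ico_eq_sum_range]
    have hcong : ∀ i ∈ range (b + 1 + 1 - 1),
        (if b*x + a*(1+i) < N then (N:ℚ) - ((b:ℚ)*x + (a:ℚ)*((1+i:ℕ):ℚ)) else 0)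
        = (if a*i < b*(a+1-x) then ((b*(a+1-x) : ℕ):ℚ) - a*i else 0) := by
      intro i _
      have hma : a*(1+i) = a + a*i := by ring
      have hc : (b*x + a*(1+i) < N) ↔ (a*i < b*(a+1-x)) := by omega
      by_cases h : a*i < b*(a+1-x)
      · rw [if_pos (hc.mpr h), if_pos h]
        have hc2 : (N:ℚ) = (b:ℚ)*x + a + (b*(a+1-x) : ℕ) := by exact_mod_cast hkey.symm
        rw [hc2]; push_cast; ring
      · rw [if_neg (fun hh => h (hc.mp hh)), if_neg h]
    rw [Finset.sum_congr rfl hcong]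
    exact inner_bound a (b*(a+1-x)) ((b+1).succ - 1) ha0
  -- the numerator sum
  have hT : ∑ p ∈ (Finset.Icc 1 (a + 1) ×ˢ Finset.Icc 1 (b + 1)).filter
          (fun p => b * p.1 + a * p.2 < N),
        ((N:ℚ) - ((b:ℚ)*p.1 + (a:ℚ)*p.2)) ≤ (N:ℚ)^2/6 := by
    rw [Finset.sum_filter, Finset.sum_product]
    calc ∑ x ∈ Icc 1 (a+1), ∑ y ∈ Icc 1 (b+1),
          (if b*x + a*y < N then (N:ℚ) - ((b:ℚ)*x + (a:ℚ)*y) else 0)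
        ≤ ∑ x ∈ Icc 1 (a+1), (2*((b*(a+1-x):ℕ):ℚ) + a)^2/(8*a) := Finset.sum_le_sum key
      _ = ∑ j ∈ range (a+1), (2*((b*j:ℕ):ℚ) + a)^2/(8*a) := by
          rw [← Finset.Ico_add_one_right_eq_Icc, Finset.sum_Ico_eq_sum_range,
            ← Finset.sum_range_reflect (fun j => (2*((b*j:ℕ):ℚ)+a)^2/(8*(a:ℚ))) (a+1)]
          apply Finset.sum_congr (by norm_num)
          intro i hi
          have hidx : a + 1 - (1 + i) = a + 1 - 1 - i := by omega
          rw [hidx]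
      _ ≤ (N:ℚ)^2/6 := by
          have hexp : ∀ j ∈ range (a+1), (2*((b*j:ℕ):ℚ) + a)^2/(8*(a:ℚ))
              = (2*(b:ℚ)*j + a)^2 / (8*a) := by
            intro j _; push_cast; ring
          rw [Finset.sum_congr rfl hexp, ← Finset.sum_div, sum_sq_aff,
            div_le_div_iff₀ (by positivity) (by norm_num)]
          have haq : (2:ℚ) ≤ a := by exact_mod_cast ha
          have hbq : (2:ℚ) ≤ b := by exact_mod_cast hb
          have hNcast : (N:ℚ) = (a:ℚ)*b + a + b := by rw [hNval]; push_cast; ring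
          rw [hNcast]
          push_cast
          nlinarith [mul_nonneg (sub_nonneg.2 haq) (sub_nonneg.2 hbq),
            mul_pos (by linarith : (0:ℚ) < a) (by linarith : (0:ℚ) < b),
            sq_nonneg ((a:ℚ) - b), mul_nonneg (mul_nonneg (by linarith : (0:ℚ) ≤ a) (by linarith : (0:ℚ) ≤ b)) (sub_nonneg.2 haq),
            mul_nonneg (mul_nonneg (by linarith : (0:ℚ) ≤ a) (by linarith : (0:ℚ) ≤ b)) (sub_nonneg.2 hbq)]
  -- rewrite the original sum
  have hSe : ∑ p ∈ (Finset.Icc 1 (a + 1) ×ˢ Finset.Icc 1 (b + 1)).filter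
          (fun p => b * p.1 + a * p.2 < N),
        (1 - ((b : ℚ) * p.1 + (a : ℚ) * p.2) / (((a:ℚ) + 1) * ((b:ℚ) + 1) - 1))
      = (∑ p ∈ (Finset.Icc 1 (a + 1) ×ˢ Finset.Icc 1 (b + 1)).filter
          (fun p => b * p.1 + a * p.2 < N),
        ((N:ℚ) - ((b:ℚ)*p.1 + (a:ℚ)*p.2))) / (N:ℚ) := by
    rw [Finset.sum_div]
    refine Finset.sum_congr rfl fun p hp => ?_
    rw [hNq, sub_div, div_self hN0]
  rw [hSe]
  have hfinal : (∑ p ∈ (Finset.Icc 1 (a + 1) ×ˢ Finset.Icc 1 (b + 1)).filter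
          (fun p => b * p.1 + a * p.2 < N),
        ((N:ℚ) - ((b:ℚ)*p.1 + (a:ℚ)*p.2))) / (N:ℚ) ≤ (N:ℚ)/6 := by
    have hNpos : (0:ℚ) < N := by
      have : 0 < N := by omega
      exact_mod_cast this
    calc _ ≤ ((N:ℚ)^2/6) / (N:ℚ) := by gcongr
      _ = (N:ℚ)/6 := by field_simp
  have : ((a:ℚ)+1)*((b:ℚ)+1) = (N:ℚ) + 1 := by linarith [hNq]
  linarith
end

section
/- Let (k_i, n_i), i = 1,...,g, be Puiseux pairs of an irreducible plane curve singularity, with w_i defined by w_1 = k_1, w_i = n_{i-1}n_i w_{i-1} + k_i, and n_i' = n_{i+1}⋯n_g (n_g' = 1). Define S_i^+ = (n_i-1)(w_i-1)(n_i+w_i+1)/(n_i w_i) and S_i^- = (n_i-1)(w_i-1)(n_i'-1). Then ∑_{i=1}^g (S_i^+ - S_i^-) ≥ S_1^+ ≥ 2, with the first inequality strict if g ≥ 2. -/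
open Finset

set_option maxHeartbeats 1000000 in
theorem stmt_14 (g : ℕ) (hg : 1 ≤ g) (k n w : ℕ → ℕ)
    (hcop : ∀ i, 1 ≤ i → i ≤ g → Nat.gcd (k i) (n i) = 1)
    (hn : ∀ i, 1 ≤ i → i ≤ g → 2 ≤ n i)
    (hk1 : k 1 > n 1)
    (hki : ∀ i, 2 ≤ i → i ≤ g → k i > k (i - 1) * n i)
    (hw1 : w 1 = k 1)
    (hwi : ∀ i, 2 ≤ i → i ≤ g → w i = n (i - 1) * n i * w (i - 1) + k i) :
    (∑ i ∈ Finset.Icc 1 g,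
        (((n i : ℚ) - 1) * ((w i : ℚ) - 1) * ((n i : ℚ) + w i + 1) / (n i * w i) -
          ((n i : ℚ) - 1) * ((w i : ℚ) - 1) *
            ((∏ j ∈ Finset.Icc (i + 1) g, (n j : ℚ)) - 1)) ≥
      ((n 1 : ℚ) - 1) * ((w 1 : ℚ) - 1) * ((n 1 : ℚ) + w 1 + 1) / (n 1 * w 1)) ∧
    ((n 1 : ℚ) - 1) * ((w 1 : ℚ) - 1) * ((n 1 : ℚ) + w 1 + 1) / (n 1 * w 1) ≥ 2 ∧
    (2 ≤ g →
      ∑ i ∈ Finset.Icc 1 g,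
          (((n i : ℚ) - 1) * ((w i : ℚ) - 1) * ((n i : ℚ) + w i + 1) / (n i * w i) -
            ((n i : ℚ) - 1) * ((w i : ℚ) - 1) *
              ((∏ j ∈ Finset.Icc (i + 1) g, (n j : ℚ)) - 1)) >
        ((n 1 : ℚ) - 1) * ((w 1 : ℚ) - 1) * ((n 1 : ℚ) + w 1 + 1) / (n 1 * w 1)) := by
  -- basic integer bounds
  have hk3 : ∀ m, 1 ≤ m → m ≤ g → 3 ≤ k m := by
    intro m hm
    induction m, hm using Nat.le_induction with
    | base =>
      intro _
      have h2 := hn 1 le_rfl hg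
      omega
    | succ m hm ih =>
      intro hmg
      have hmg' : m ≤ g := by omega
      have h1 := hki (m + 1) (by omega) hmg
      simp only [Nat.add_sub_cancel] at h1
      have h2 := ih hmg'
      have h3 := hn (m + 1) (by omega) hmg
      have h4 : 3 * 2 ≤ k m * n (m + 1) := Nat.mul_le_mul h2 h3
      omega
  have hw3 : ∀ m, 1 ≤ m → m ≤ g → 3 ≤ w m := by
    intro m hm hmg
    rcases eq_or_lt_of_le hm with h | h
    · rw [← h, hw1]; exact hk3 1 le_rfl hg
    · rw [hwi m h hmg]
      have := hk3 m hm hmg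
      omega
  -- the products
  set P : ℕ → ℕ := fun i => ∏ j ∈ Finset.Icc (i + 1) g, n j with hPdef
  have hP1 : ∀ m, 1 ≤ P m := by
    intro m
    apply Finset.one_le_prod'
    intro j hj
    rw [Finset.mem_Icc] at hj
    have := hn j (by omega) hj.2
    omega
  have hPg : P g = 1 := by
    simp only [hPdef]
    rw [Finset.Icc_eq_empty (by omega), Finset.prod_empty]
  have hPsplit : ∀ m, m + 1 ≤ g → P m = n (m + 1) * P (m + 1) := by
    intro m hmg
    have hins : Finset.Icc (m + 1) g = insert (m + 1) (Finset.Icc (m + 2) g) := by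
      ext x
      simp only [Finset.mem_Icc, Finset.mem_insert]
      omega
    simp only [hPdef]
    rw [hins, Finset.prod_insert (by simp only [Finset.mem_Icc]; omega)]
  have hP2 : 2 ≤ g → 2 ≤ P 1 := by
    intro h2
    have hmem : 2 ∈ Finset.Icc 2 g := by simp only [Finset.mem_Icc]; omega
    have hle : n 2 ≤ P 1 := by
      apply Finset.single_le_prod' _ hmem
      intro j hj
      rw [Finset.mem_Icc] at hj
      have := hn j (by omega) hj.2
      omega
    have := hn 2 (by omega) h2
    omega
  -- cast of product
  have hcastP : ∀ i, (∏ j ∈ Finset.Icc (i + 1) g, (n j : ℚ)) = ((P i : ℕ) : ℚ) := by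
    intro i
    simp only [hPdef]
    push_cast
    rfl
  -- the key induction
  have key : ∀ m, 1 ≤ m → m ≤ g →
      (∑ i ∈ Finset.Icc 1 m,
        (((n i : ℚ) - 1) * ((w i : ℚ) - 1) * ((n i : ℚ) + w i + 1) / (n i * w i) -
          ((n i : ℚ) - 1) * ((w i : ℚ) - 1) *
            ((∏ j ∈ Finset.Icc (i + 1) g, (n j : ℚ)) - 1))) ≥
      ((n 1 : ℚ) - 1) * ((w 1 : ℚ) - 1) * ((n 1 : ℚ) + w 1 + 1) / (n 1 * w 1)
        + ((w 1 : ℚ) - 1) * ((P 1 : ℚ) - 1)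
        - (n m : ℚ) * ((w m : ℚ) - 1) * ((P m : ℚ) - 1) := by
    intro m hm
    induction m, hm using Nat.le_induction with
    | base =>
      intro hgg
      rw [Finset.Icc_self, Finset.sum_singleton, hcastP 1]
      have h1 : (2 : ℚ) ≤ (n 1 : ℚ) := by exact_mod_cast hn 1 le_rfl hg
      have hz : (n 1 : ℚ) * ((w 1 : ℚ) - 1) * (((P 1 : ℕ) : ℚ) - 1)
          - ((w 1 : ℚ) - 1) * (((P 1 : ℕ) : ℚ) - 1)
          - ((n 1 : ℚ) - 1) * ((w 1 : ℚ) - 1) * (((P 1 : ℕ) : ℚ) - 1) = 0 := by ring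
      linarith [hz]
    | succ m hm ih =>
      intro hmg
      have hmg' : m ≤ g := by omega
      have hsum := Finset.sum_Icc_succ_top (by omega : 1 ≤ m + 1)
        (f := fun i => (((n i : ℚ) - 1) * ((w i : ℚ) - 1) * ((n i : ℚ) + w i + 1) / (n i * w i) -
          ((n i : ℚ) - 1) * ((w i : ℚ) - 1) *
            ((∏ j ∈ Finset.Icc (i + 1) g, (n j : ℚ)) - 1)))
      rw [hsum]
      have IH := ih hmg'
      -- step inequality
      have hstep : (n m : ℚ) * ((w m : ℚ) - 1) * ((P m : ℚ) - 1)
          + ((n (m+1) : ℚ) - 1) * ((w (m+1) : ℚ) - 1) * ((P (m+1) : ℚ) - 1)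
          - (((n (m+1) : ℚ) - 1) * ((w (m+1) : ℚ) - 1) * ((n (m+1) : ℚ) + w (m+1) + 1)
              / (n (m+1) * w (m+1)))
          ≤ (n (m+1) : ℚ) * ((w (m+1) : ℚ) - 1) * ((P (m+1) : ℚ) - 1) := by
        have ha2 : (2 : ℚ) ≤ (n m : ℚ) := by exact_mod_cast hn m (by omega) hmg'
        have hb3 : (3 : ℚ) ≤ (w m : ℚ) := by exact_mod_cast hw3 m (by omega) hmg'
        have hc2 : (2 : ℚ) ≤ (n (m+1) : ℚ) := by exact_mod_cast hn (m+1) (by omega) hmg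
        have hW3 : (3 : ℚ) ≤ (w (m+1) : ℚ) := by exact_mod_cast hw3 (m+1) (by omega) hmg
        have hN1 : (1 : ℚ) ≤ (P (m+1) : ℚ) := by exact_mod_cast hP1 (m+1)
        have hK3 : (3 : ℚ) ≤ (k (m+1) : ℚ) := by exact_mod_cast hk3 (m+1) (by omega) hmg
        set a : ℚ := (n m : ℚ) with ha
        set b : ℚ := (w m : ℚ) with hb
        set c : ℚ := (n (m+1) : ℚ) with hc
        set W : ℚ := (w (m+1) : ℚ) with hW
        set N : ℚ := (P (m+1) : ℚ) with hN
        set K : ℚ := (k (m+1) : ℚ) with hK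
        have hWeq : W = a * c * b + K := by
          have := hwi (m+1) (by omega) hmg
          simp only [Nat.add_sub_cancel] at this
          rw [hW, this]
          push_cast
          ring
        have hPm : (P m : ℚ) = c * N := by
          have := hPsplit m hmg
          rw [this]
          push_cast
          ring
        rw [hPm]
        -- lower bound on the S^+ term
        have hcpos : (0 : ℚ) < c := by linarith
        have hWpos : (0 : ℚ) < W := by linarith
        have hSp : (c - 1) * (a * b) ≤ (c - 1) * (W - 1) * (c + W + 1) / (c * W) := by
          rw [le_div_iff₀ (by positivity)]
          have habcW : (c - 1) * (a * b) * (c * W) = (c - 1) * (W - K) * W := by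
            rw [hWeq]; ring
          rw [habcW]
          have hKW : (0 : ℚ) ≤ K * W := by positivity
          have hcW : c * 2 ≤ c * (W - 1) :=
            mul_le_mul_of_nonneg_left (by linarith) (by linarith)
          have hinner : (0 : ℚ) ≤ c * W + K * W - c - 1 := by nlinarith [hKW, hcW]
          have hq : (0 : ℚ) ≤ (c - 1) * (c * W + K * W - c - 1) :=
            mul_nonneg (by linarith) hinner
          have hid2 : (c - 1) * (W - 1) * (c + W + 1) - (c - 1) * (W - K) * W
              = (c - 1) * (c * W + K * W - c - 1) := by ring
          linarith [hq, hid2]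
        have h3 : (0 : ℚ) ≤ (K - 1) * (N - 1) := by
          apply mul_nonneg <;> linarith
        have h4 : (0 : ℚ) ≤ a * (c * N - 1) := by
          have hcN : (2 : ℚ) * 1 ≤ c * N :=
            mul_le_mul hc2 hN1 (by norm_num) (by linarith)
          apply mul_nonneg
          · linarith
          · linarith
        have hident : (W - 1) * (N - 1) + (c - 1) * (a * b) - a * (b - 1) * (c * N - 1)
            = (K - 1) * (N - 1) + a * (c * N - 1) := by
          rw [hWeq]; ring
        linarith [hSp, h3, h4, hident]
      rw [hcastP (m+1)]
      linarith [IH, hstep]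
  -- conclusions
  have hkeyg := key g hg le_rfl
  rw [hPg] at hkeyg
  push_cast at hkeyg
  have hw1Q : (3 : ℚ) ≤ (w 1 : ℚ) := by exact_mod_cast hw3 1 le_rfl hg
  have hP1Q : (1 : ℚ) ≤ (P 1 : ℚ) := by exact_mod_cast hP1 1
  have hE : (0 : ℚ) ≤ ((w 1 : ℚ) - 1) * ((P 1 : ℚ) - 1) := by
    apply mul_nonneg <;> linarith
  refine ⟨by linarith, ?_, ?_⟩
  · -- S_1^+ ≥ 2
    have hn1 : (2 : ℚ) ≤ (n 1 : ℚ) := by exact_mod_cast hn 1 le_rfl hg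
    have hwk : (n 1 : ℚ) + 1 ≤ (w 1 : ℚ) := by
      have : n 1 + 1 ≤ w 1 := by rw [hw1]; omega
      exact_mod_cast this
    rw [ge_iff_le, le_div_iff₀ (by positivity)]
    nlinarith [mul_nonneg (by linarith : (0:ℚ) ≤ (w 1:ℚ) - (n 1:ℚ) - 1) (mul_nonneg (by linarith : (0:ℚ) ≤ (n 1:ℚ) - 1) (by linarith : (0:ℚ) ≤ (w 1:ℚ))),
        mul_nonneg (by linarith : (0:ℚ) ≤ (n 1:ℚ) - 2) (by linarith : (0:ℚ) ≤ (w 1:ℚ) - 3),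
        mul_nonneg (by linarith : (0:ℚ) ≤ (w 1:ℚ) - 3) (by linarith : (0:ℚ) ≤ (n 1:ℚ) - 1)]
  · -- strict inequality when 2 ≤ g
    intro h2
    have hP2Q : (2 : ℚ) ≤ (P 1 : ℚ) := by exact_mod_cast hP2 h2
    have hEpos : (0 : ℚ) < ((w 1 : ℚ) - 1) * ((P 1 : ℚ) - 1) := by
      apply mul_pos <;> linarith
    linarith
end

section
/- Let k ≥ 1 be an integer and let α'_1, ..., α'_μ be rationals in (0, n+1) such that k·(1 - α'_i) ∈ ℤ whenever α'_i < 1. Then the number of pairs (i, j) with 1 ≤ j ≤ k and α'_i + j/(k+1) ≤ 1 equals k · ∑_{α'_i < 1} (1 - α'_i). -/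
open Finset

lemma inner_count (k : ℕ) (hk : 1 ≤ k) (a : ℚ) (ha : 0 < a)
    (h : a < 1 → ∃ m : ℤ, (k : ℚ) * (1 - a) = m) :
    (((Finset.Icc 1 k).filter (fun j : ℕ => a + (j : ℚ) / (k + 1) ≤ 1)).card : ℚ)
      = if a < 1 then (k : ℚ) * (1 - a) else 0 := by
  have hkpos : (0 : ℚ) < (k : ℚ) := by exact_mod_cast hk
  have hk1 : (0 : ℚ) < (k : ℚ) + 1 := by linarith
  by_cases hlt : a < 1
  · obtain ⟨m, hm⟩ := h hlt
    have hmpos : (0 : ℚ) < (m : ℚ) := by rw [← hm]; nlinarith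
    have hmk : (m : ℚ) < (k : ℚ) := by rw [← hm]; nlinarith
    have hm0 : 0 < m := by exact_mod_cast hmpos
    have hmk' : m < (k : ℤ) := by exact_mod_cast hmk
    have htn : ((m.toNat : ℤ)) = m := Int.toNat_of_nonneg hm0.le
    have hset : (Finset.Icc 1 k).filter (fun j : ℕ => a + (j : ℚ) / (k + 1) ≤ 1)
        = Finset.Icc 1 m.toNat := by
      ext j
      simp only [Finset.mem_filter, Finset.mem_Icc]
      constructor
      · rintro ⟨⟨h1, h2⟩, hcond⟩
        refine ⟨h1, ?_⟩
        have hdiv : (j : ℚ) / (k + 1) ≤ 1 - a := by linarith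
        have hja : (j : ℚ) ≤ (1 - a) * (k + 1) := by
          rw [div_le_iff₀ hk1] at hdiv; linarith
        have hjk : (j : ℚ) * k ≤ (m : ℚ) * (k + 1) := by nlinarith
        have hjkZ : (j : ℤ) * k ≤ m * (k + 1) := by exact_mod_cast hjk
        by_contra hj
        push_neg at hj
        have hjZ : (m : ℤ) + 1 ≤ (j : ℤ) := by omega
        have : ((m : ℤ) + 1) * k ≤ (j : ℤ) * k := by
          apply mul_le_mul_of_nonneg_right hjZ; positivity
        nlinarith
      · rintro ⟨h1, h2⟩
        have hjZ : (j : ℤ) ≤ m := by omega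
        have hjk : (j : ℕ) ≤ k := by omega
        refine ⟨⟨h1, hjk⟩, ?_⟩
        have hjm : (j : ℚ) ≤ (m : ℚ) := by exact_mod_cast hjZ
        have key : (j : ℚ) * k ≤ ((1 - a) * (k + 1)) * k := by nlinarith
        have hja : (j : ℚ) ≤ (1 - a) * (k + 1) :=
          (mul_le_mul_iff_of_pos_right hkpos).mp key
        have : (j : ℚ) / (k + 1) ≤ 1 - a := by
          rw [div_le_iff₀ hk1]; linarith
        linarith
    rw [hset, if_pos hlt, Nat.card_Icc]
    have h1 : m.toNat + 1 - 1 = m.toNat := by omega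
    rw [h1, hm]
    exact_mod_cast htn
  · rw [if_neg hlt]
    push_neg at hlt
    have hempty : (Finset.Icc 1 k).filter (fun j : ℕ => a + (j : ℚ) / (k + 1) ≤ 1) = ∅ := by
      rw [Finset.filter_eq_empty_iff]
      intro j hj
      simp only [Finset.mem_Icc] at hj
      have : (0 : ℚ) < (j : ℚ) / (k + 1) := by
        apply div_pos
        · exact_mod_cast hj.1
        · exact hk1
      push_neg
      linarith
    rw [hempty]
    simp

theorem stmt_15 (k μ n : ℕ) (hk : 1 ≤ k) (α : Fin μ → ℚ)
    (hpos : ∀ i, 0 < α i) (hlt : ∀ i, α i < n + 1)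
    (hint : ∀ i, α i < 1 → ∃ m : ℤ, (k : ℚ) * (1 - α i) = m) :
    (((Finset.univ ×ˢ Finset.Icc 1 k).filter
        (fun p : Fin μ × ℕ => α p.1 + (p.2 : ℚ) / (k + 1) ≤ 1)).card : ℚ) =
      k * ∑ i ∈ Finset.univ.filter (fun i => α i < 1), (1 - α i) := by
  have hcard : ((Finset.univ ×ˢ Finset.Icc 1 k).filter
        (fun p : Fin μ × ℕ => α p.1 + (p.2 : ℚ) / (k + 1) ≤ 1)).card
      = ∑ i : Fin μ, ((Finset.Icc 1 k).filter
          (fun j : ℕ => α i + (j : ℚ) / (k + 1) ≤ 1)).card := by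
    rw [Finset.card_filter, Finset.sum_product]
    exact Finset.sum_congr rfl (fun i _ => (Finset.card_filter _ _).symm)
  rw [hcard]
  push_cast
  rw [Finset.mul_sum, Finset.sum_filter]
  apply Finset.sum_congr rfl
  intro i _
  exact inner_count k hk (α i) (hpos i) (hint i)
end

section
/- Let n, m ≥ 1. For the curve singularity with spectral genus p̃_g = (n+2)^2/(2(2n+3)) + (m+2)^2/(2(2m+3)) - 1/2 and Milnor number μ = 2n + 2m + 7, one has μ/6 - p̃_g ≥ 8/15 > 1/6. -/
theorem stmt_18 (n m : ℕ) (hn : 1 ≤ n) (hm : 1 ≤ m) :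
    (2 * (n : ℚ) + 2 * m + 7) / 6 -
        (((n : ℚ) + 2) ^ 2 / (2 * (2 * n + 3)) + ((m : ℚ) + 2) ^ 2 / (2 * (2 * m + 3))
          - 1 / 2) ≥ 8 / 15 ∧
      (8 : ℚ) / 15 > 1 / 6 := by
  have key : ∀ k : ℚ, 1 ≤ k → (k + 2) ^ 2 / (2 * (2 * k + 3)) ≤ (2 * k + 3) / 6 + 1 / 15 := by
    intro k hk
    rw [div_le_iff₀ (by linarith)]
    nlinarith [mul_nonneg (sub_nonneg.2 hk) (by linarith : (0:ℚ) ≤ 5 * k + 9)]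
  have hn' : (1:ℚ) ≤ n := by exact_mod_cast hn
  have hm' : (1:ℚ) ≤ m := by exact_mod_cast hm
  exact ⟨by linarith [key n hn', key m hm'], by norm_num⟩
end

section
/- Let α_1 ≤ ... ≤ α_μ be real numbers in (-1, 1), symmetric under x ↦ -x (so α_j = -α_{μ-j+1}), satisfying the variance bound (1/μ)∑_j α_j^2 ≤ (α_μ - α_1)/12 = α_μ/6. If α_μ ≤ (2/3)·√(1 - 1/μ), then ∑_{0 < α_j < 1} α_j ≤ (μ-1)/6. -/
open Finset

private lemma key_poly (m a : ℝ) (hm : 2 ≤ m) (ha : 0 ≤ a) (h1 : 12*a ≤ m)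
    (h2 : 9*m*a^2 ≤ 4*(m-1)) :
    0 ≤ 36*m*a^2 - (3*m^2+18*m-24)*a + 2*(m-1)^2 := by
  nlinarith [mul_nonneg ha (sub_nonneg.2 h1), mul_nonneg (sub_nonneg.2 hm) (sub_nonneg.2 h2),
    mul_nonneg (sub_nonneg.2 h1) (sub_nonneg.2 h2), sq_nonneg (6*a-1), sq_nonneg (m-2),
    mul_nonneg (mul_nonneg ha ha) (sub_nonneg.2 hm), sq_nonneg (m-12*a), sq_nonneg (3*a*m - m +1)]

private lemma key2 (m a : ℝ)
    (key : 0 ≤ 36*m*a^2 - (3*m^2+18*m-24)*a + 2*(m-1)^2) :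
    (m/2-1)*(m*a/12 - a^2) ≤ ((m-1)/6 - a)^2 := by nlinarith [key]

private lemma final_step (m a s : ℝ) (hs : 0 ≤ s) (hr : 0 ≤ (m-1)/6 - a)
    (h2 : s^2 ≤ (m/2-1)*(m*a/12-a^2))
    (key : 0 ≤ 36*m*a^2 - (3*m^2+18*m-24)*a + 2*(m-1)^2) :
    a + s ≤ (m-1)/6 := by
  have h3 := key2 m a key
  nlinarith [h2, h3, hr, hs]

theorem stmt_19 (μ : ℕ) (hμ : 1 ≤ μ) (α : Fin μ → ℝ)
    (hmono : ∀ i j : Fin μ, i ≤ j → α i ≤ α j)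
    (hrange : ∀ i, -1 < α i ∧ α i < 1)
    (hsym : ∀ i, α i = -α i.rev)
    (hvar : (1 / (μ : ℝ)) * ∑ i, α i ^ 2 ≤
      (α ⟨μ - 1, Nat.sub_lt hμ one_pos⟩ - α ⟨0, hμ⟩) / 12)
    (hmax : α ⟨μ - 1, Nat.sub_lt hμ one_pos⟩ ≤ (2 / 3) * Real.sqrt (1 - 1 / μ)) :
    ∑ i ∈ Finset.univ.filter (fun i => 0 < α i ∧ α i < 1), α i ≤ ((μ : ℝ) - 1) / 6 := by
  classical
  have hμR : (1:ℝ) ≤ μ := by exact_mod_cast hμ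
  have hμpos : (0:ℝ) < μ := by linarith
  set t : Fin μ := ⟨μ-1, Nat.sub_lt hμ one_pos⟩ with ht
  set P : Finset (Fin μ) := Finset.univ.filter (fun i => 0 < α i ∧ α i < 1) with hPdef
  by_cases hPe : P = ∅
  · rw [hPe, Finset.sum_empty]; linarith
  have hPne : P.Nonempty := Finset.nonempty_iff_ne_empty.2 hPe
  obtain ⟨i0, hi0⟩ := hPne
  have hi0' := (Finset.mem_filter.1 hi0).2
  -- α 0 = -α t
  have h0rev : (⟨0, hμ⟩ : Fin μ).rev = t := by
    apply Fin.ext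
    rw [Fin.val_rev]
    simp [ht]
  have h0 : α ⟨0, hμ⟩ = - α t := by rw [hsym ⟨0, hμ⟩, h0rev]
  -- total sum of squares bound
  have hsum2 : ∑ i, α i ^ 2 ≤ (μ:ℝ) * α t / 6 := by
    rw [h0] at hvar
    have h2' : (1/(μ:ℝ)) * ∑ i, α i ^2 ≤ α t / 6 := by linarith [hvar]
    have := mul_le_mul_of_nonneg_left h2' (le_of_lt hμpos)
    calc ∑ i, α i^2 = (μ:ℝ) * ((1/(μ:ℝ)) * ∑ i, α i^2) := by field_simp
    _ ≤ (μ:ℝ) * (α t / 6) := this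
    _ = (μ:ℝ) * α t / 6 := by ring
  -- t is the max
  have hle : ∀ i : Fin μ, α i ≤ α t := by
    intro i
    apply hmono i t
    rw [Fin.le_def]
    have := i.isLt
    simp [ht]
    omega
  have hapos : 0 < α t := lt_of_lt_of_le hi0'.1 (hle i0)
  have htP : t ∈ P := Finset.mem_filter.2 ⟨Finset.mem_univ _, hapos, (hrange t).2⟩
  -- mirror set
  set Q := P.image Fin.rev with hQ
  have hrevα : ∀ i, α i.rev = - α i := fun i => by rw [hsym i]; ring
  have hQneg : ∀ j ∈ Q, α j < 0 := by
    intro j hj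
    obtain ⟨i, hiP, rfl⟩ := Finset.mem_image.1 hj
    rw [hrevα]
    have := (Finset.mem_filter.1 hiP).2.1
    linarith
  have hdisj : Disjoint P Q := by
    rw [Finset.disjoint_left]
    intro i hiP hiQ
    exact absurd (Finset.mem_filter.1 hiP).2.1 (not_lt.2 (le_of_lt (hQneg i hiQ)))
  have hcardQ : Q.card = P.card := Finset.card_image_of_injective _ Fin.rev_injective
  have hcard2 : 2 * P.card ≤ μ := by
    have h1 := Finset.card_le_card (Finset.subset_univ (P ∪ Q))
    rw [Finset.card_union_of_disjoint hdisj, hcardQ, Finset.card_univ, Fintype.card_fin] at h1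
    omega
  have hsumQ : ∑ j ∈ Q, α j ^2 = ∑ i ∈ P, α i ^2 := by
    rw [hQ, Finset.sum_image (fun a _ b _ h => Fin.rev_injective h)]
    exact Finset.sum_congr rfl (fun i _ => by rw [hrevα]; ring)
  have hPsq : ∑ i ∈ P, α i ^2 ≤ (μ:ℝ) * α t / 12 := by
    have hsub : ∑ i ∈ P ∪ Q, α i^2 ≤ ∑ i, α i ^2 :=
      Finset.sum_le_sum_of_subset_of_nonneg (Finset.subset_univ _) (fun i _ _ => sq_nonneg _)
    rw [Finset.sum_union hdisj, hsumQ] at hsub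
    linarith
  -- a ≤ μ / 12
  have haP : α t ^2 ≤ ∑ i ∈ P, α i ^2 := Finset.single_le_sum (fun i _ => sq_nonneg (α i)) htP
  have ha12 : 12 * α t ≤ (μ:ℝ) := by nlinarith
  have hμ2 : 2 ≤ μ := by
    have : 1 ≤ P.card := Finset.card_pos.2 ⟨i0, hi0⟩
    omega
  have hμ2R : (2:ℝ) ≤ μ := by exact_mod_cast hμ2
  -- erase the max
  set P' := P.erase t with hP'
  have hsumP : ∑ i ∈ P, α i = α t + ∑ i ∈ P', α i := (Finset.add_sum_erase _ _ htP).symm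
  have hsq' : α t ^2 + ∑ i ∈ P', α i ^2 = ∑ i ∈ P, α i ^2 := Finset.add_sum_erase P (fun i => α i ^ 2) htP
  have hcard' : (P'.card : ℝ) ≤ (μ:ℝ)/2 - 1 := by
    have h1 : P'.card = P.card - 1 := Finset.card_erase_of_mem htP
    have h2 : 1 ≤ P.card := Finset.card_pos.2 ⟨i0, hi0⟩
    have h3 : (2 * P'.card + 2 : ℕ) ≤ μ := by omega
    have h4 : ((2 * P'.card + 2 : ℕ) : ℝ) ≤ (μ:ℝ) := by exact_mod_cast h3
    push_cast at h4
    linarith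
  have hCS : (∑ i ∈ P', α i)^2 ≤ (P'.card : ℝ) * ∑ i ∈ P', α i ^2 :=
    sq_sum_le_card_mul_sum_sq
  have hs_nonneg : 0 ≤ ∑ i ∈ P', α i :=
    Finset.sum_nonneg (fun i hi =>
      le_of_lt (Finset.mem_filter.1 (Finset.mem_of_mem_erase hi)).2.1)
  have hsq_nonneg : 0 ≤ ∑ i ∈ P', α i ^2 := Finset.sum_nonneg (fun i _ => sq_nonneg _)
  -- bound a² via hmax
  have hsqrt : 9 * (μ:ℝ) * α t ^2 ≤ 4 * ((μ:ℝ) - 1) := by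
    have h1μ : (0:ℝ) ≤ 1 - 1/(μ:ℝ) := by
      rw [sub_nonneg, div_le_one hμpos]; exact hμR
    have hsq := Real.sq_sqrt h1μ
    have hsn := Real.sqrt_nonneg (1 - 1/(μ:ℝ))
    have ha2 : α t ^2 ≤ (4/9) * (1 - 1/(μ:ℝ)) := by nlinarith
    have : (μ:ℝ) * ((4/9) * (1 - 1/(μ:ℝ))) = (4/9) * ((μ:ℝ) - 1) := by field_simp
    nlinarith
  -- key polynomial inequality
  have key := key_poly (μ:ℝ) (α t) hμ2R (le_of_lt hapos) ha12 hsqrt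
  -- Cauchy-Schwarz conclusion
  have hb : ∑ i ∈ P', α i^2 ≤ (μ:ℝ) * α t/12 - α t^2 := by linarith
  have hs2 : (∑ i ∈ P', α i)^2 ≤ ((μ:ℝ)/2-1)*((μ:ℝ) * α t/12 - α t^2) := by
    calc (∑ i ∈ P', α i)^2 ≤ (P'.card : ℝ) * ∑ i ∈ P', α i ^2 := hCS
    _ ≤ ((μ:ℝ)/2-1)*((μ:ℝ) * α t/12 - α t^2) := by
        apply mul_le_mul hcard' hb hsq_nonneg
        linarith
  have hr : 0 ≤ ((μ:ℝ)-1)/6 - α t := by linarith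
  have hfin := final_step (μ:ℝ) (α t) (∑ i ∈ P', α i) hs_nonneg hr hs2 key
  rw [hsumP]
  linarith
end
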